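/- arXiv:1309.7196 — 6 statements merged into one kernel-verified Lean document; each statement's English description precedes it below -/
import Mathlib

section
/- Let Γ : [0,∞) → (0,∞) be a decreasing function with Γ(r) ∼ r^b e^{−ηr} as r → ∞ for some b ∈ ℝ and η > 0. Then there exist ρ₀ > 0 and C > 0 (independent of K) such that for all K ∈ ℕ₊, all points Q_1,…,Q_K ∈ ℝ^N with minimal mutual distance ρ ≥ ρ₀, and every index j₀, the sum Σ_{j ≠ j₀} Γ(|Q_{j₀} − Q_j|) is at most C Γ(ρ). -/
/-!
Group the points `Q j ≠ Q j₀` into shells `⌊|Q j₀ - Q j| / ρ⌋ = m ≥ 1`. The balls of radius `ρ / 2`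
around the points are disjoint, so comparing volumes bounds the `m`-th shell by `(2m + 3) ^ N`
points. The two-sided asymptotics give `Γ d ≤ (c₂ / c₁) Γ(ρ) (d / ρ) ^ B e^{-η (d - ρ)}` with
`B = max b 0`, and once `η ρ ≥ N + B + 1` the exponential beats both polynomial factors: shell `m`
contributes at most a constant times `e^{-m} Γ(ρ)`, and the geometric series converges.
-/

open Metric MeasureTheory Module Finset Real

open scoped Classical

theorem sum_div_le_sum_image_of_card_fiber_le {ι κ : Type*} [DecidableEq κ] (s : Finset ι)
    (f : ι → κ) {a c : κ → ℝ} (ha : ∀ m ∈ s.image f, 0 ≤ a m)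
    (hc : ∀ m ∈ s.image f, (#{j ∈ s | f j = m} : ℝ) ≤ c m) :
    ∑ j ∈ s, a (f j) / c (f j) ≤ ∑ m ∈ s.image f, a m := by
  rw [← sum_fiberwise_of_maps_to fun j hj => mem_image_of_mem f hj]
  refine sum_le_sum fun m hm => ?_
  have hfiber : 0 < (#{j ∈ s | f j = m} : ℝ) := by
    obtain ⟨j, hj, rfl⟩ := mem_image.mp hm
    exact_mod_cast card_pos.mpr ⟨j, by simp [hj]⟩
  have hcm : 0 < c m := hfiber.trans_le (hc m hm)
  rw [sum_congr rfl fun j hj => by rw [(mem_filter.mp hj).2], sum_const, nsmul_eq_mul,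
    mul_div_assoc', div_le_iff₀ hcm]
  exact mul_le_mul_of_nonneg_right (hc m hm) (ha m hm) |>.trans_eq (mul_comm _ _)

theorem rpow_mul_exp_neg_mul_sub_one_le {κ l t : ℝ} (hκ : 0 ≤ κ) (hl : κ + 1 ≤ l) (ht : 1 ≤ t) :
    t ^ κ * exp (-l * (t - 1)) ≤ exp (κ + 1) * exp (-t) := by
  have hpow : t ^ κ ≤ exp (κ * t) := by
    rw [mul_comm, exp_mul]
    exact rpow_le_rpow (by linarith)
      ((le_add_of_nonneg_right zero_le_one).trans (add_one_le_exp t)) hκ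
  calc t ^ κ * exp (-l * (t - 1)) ≤ exp (κ * t) * exp (-l * (t - 1)) := by gcongr
    _ ≤ exp (κ + 1) * exp (-t) := by
      rw [← exp_add, ← exp_add, exp_le_exp]
      nlinarith

theorem rpow_mul_exp_neg_le_shell_weight {n : ℕ} {B l t : ℝ} (hB : 0 ≤ B)
    (hl : n + B + 1 ≤ l) (ht : 1 ≤ t) :
    t ^ B * exp (-l * (t - 1)) ≤
      5 ^ n * exp (n + B + 1) * (exp (-1) ^ ⌊t⌋₊ / (2 * ⌊t⌋₊ + 3) ^ n) := by
  have hm : (1 : ℝ) ≤ ⌊t⌋₊ := mod_cast Nat.le_floor (by exact_mod_cast ht)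
  have hmt : (⌊t⌋₊ : ℝ) ≤ t := Nat.floor_le (by linarith)
  have htail : exp (-t) ≤ exp (-1) ^ ⌊t⌋₊ := by
    rw [← exp_nat_mul, mul_neg_one, exp_le_exp]; linarith
  rw [mul_div_assoc', le_div_iff₀ (by positivity)]
  calc t ^ B * exp (-l * (t - 1)) * (2 * ⌊t⌋₊ + 3) ^ n
      ≤ t ^ B * exp (-l * (t - 1)) * (5 * t) ^ n := by gcongr; linarith
    _ = 5 ^ n * (t ^ ((n : ℝ) + B) * exp (-l * (t - 1))) := by
      rw [rpow_add (by linarith), rpow_natCast]; ring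
    _ ≤ 5 ^ n * exp (n + B + 1) * exp (-1) ^ ⌊t⌋₊ := by
      rw [mul_assoc]
      exact mul_le_mul_of_nonneg_left
        ((rpow_mul_exp_neg_mul_sub_one_le (by positivity) hl ht).trans (by gcongr)) (by positivity)

theorem le_mul_rpow_mul_exp_of_asymptotics {Γ : ℝ → ℝ} {b η c₁ c₂ ρ d B : ℝ} (hc₁ : 0 < c₁)
    (hc₂ : 0 ≤ c₂) (hρ : 0 < ρ) (hρd : ρ ≤ d) (hbB : b ≤ B)
    (hlow : c₁ * ρ ^ b * exp (-η * ρ) ≤ Γ ρ) (hup : Γ d ≤ c₂ * d ^ b * exp (-η * d)) :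
    Γ d ≤ c₂ / c₁ * Γ ρ * ((d / ρ) ^ B * exp (-η * (d - ρ))) := by
  have hratio : 1 ≤ d / ρ := (one_le_div hρ).mpr hρd
  have hΓρ : 0 ≤ Γ ρ := (by positivity : 0 ≤ c₁ * ρ ^ b * exp (-η * ρ)).trans hlow
  have hsplit : c₂ * d ^ b * exp (-η * d) =
      c₂ / c₁ * (c₁ * ρ ^ b * exp (-η * ρ)) * ((d / ρ) ^ b * exp (-η * (d - ρ))) := by
    have hexp : exp (-η * d) = exp (-η * ρ) * exp (-η * (d - ρ)) := by rw [← exp_add]; ring_nf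
    rw [div_rpow (by linarith) hρ.le, hexp]
    field_simp
  calc Γ d ≤ c₂ / c₁ * (c₁ * ρ ^ b * exp (-η * ρ)) * ((d / ρ) ^ b * exp (-η * (d - ρ))) :=
        hup.trans_eq hsplit
    _ ≤ c₂ / c₁ * Γ ρ * ((d / ρ) ^ B * exp (-η * (d - ρ))) := by gcongr

section Packing

variable {ι E : Type*} [NormedAddCommGroup E] [NormedSpace ℝ E] [FiniteDimensional ℝ E]
  [MeasurableSpace E] [BorelSpace E] {Q : ι → E} {ρ : ℝ}

theorem card_mul_pow_le_of_pairwise_le_dist {R : ℝ} (hρ : 0 < ρ) (hR : 0 ≤ R)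
    (hQ : Pairwise fun j l => ρ ≤ dist (Q j) (Q l)) {s : Finset ι} {x : E}
    (hs : ∀ j ∈ s, dist x (Q j) ≤ R) :
    (#s : ℝ) * (ρ / 2) ^ finrank ℝ E ≤ (R + ρ / 2) ^ finrank ℝ E := by
  let μ : Measure E := Measure.addHaar
  have hdisj : (s : Set ι).PairwiseDisjoint fun j => ball (Q j) (ρ / 2) :=
    fun j _ l _ hjl => ball_disjoint_ball (by linarith [hQ hjl])
  have hsub : (⋃ j ∈ s, ball (Q j) (ρ / 2)) ⊆ ball x (R + ρ / 2) := by
    simp only [Set.iUnion_subset_iff]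
    intro j hj y hy
    rw [mem_ball] at hy ⊢
    linarith [dist_triangle y (Q j) x, dist_comm x (Q j), hs j hj]
  have hvol := (measure_biUnion_finset (μ := μ) hdisj fun _ _ => measurableSet_ball).symm
    |>.trans_le (measure_mono hsub)
  simp only [Measure.addHaar_ball_of_pos μ _ (half_pos hρ),
    Measure.addHaar_ball_of_pos μ _ (by linarith : 0 < R + ρ / 2), sum_const, nsmul_eq_mul,
    ← mul_assoc] at hvol
  have hunit : μ (ball 0 1) ≠ 0 := (measure_ball_pos μ 0 one_pos).ne'
  rw [ENNReal.mul_le_mul_iff_left hunit measure_ball_lt_top.ne, ← ENNReal.ofReal_natCast,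
    ← ENNReal.ofReal_mul (by positivity)] at hvol
  exact (ENNReal.ofReal_le_ofReal_iff (by positivity)).mp hvol

theorem card_shell_le_of_pairwise_le_dist (hρ : 0 < ρ)
    (hQ : Pairwise fun j l => ρ ≤ dist (Q j) (Q l)) (s : Finset ι) (x : E) (k : ℕ) :
    (#{j ∈ s | ⌊dist x (Q j) / ρ⌋₊ = k} : ℝ) ≤ (2 * k + 3) ^ finrank ℝ E := by
  have hball : ∀ j ∈ s.filter (fun j => ⌊dist x (Q j) / ρ⌋₊ = k),
      dist x (Q j) ≤ (k + 1) * ρ := by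
    intro j hj
    rw [← (mem_filter.mp hj).2, ← div_le_iff₀ hρ]
    exact (Nat.lt_floor_add_one _).le
  have hpack := card_mul_pow_le_of_pairwise_le_dist hρ (by positivity) hQ hball
  rw [show ((k : ℝ) + 1) * ρ + ρ / 2 = (2 * k + 3) * (ρ / 2) by ring, mul_pow] at hpack
  exact le_of_mul_le_mul_right hpack (by positivity)

theorem sum_rpow_mul_exp_le_of_pairwise_le_dist {η B : ℝ} (hρ : 0 < ρ) (hB : 0 ≤ B)
    (hηρ : finrank ℝ E + B + 1 ≤ η * ρ) (hQ : Pairwise fun j l => ρ ≤ dist (Q j) (Q l))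
    {s : Finset ι} {x : E} (hs : ∀ j ∈ s, ρ ≤ dist x (Q j)) :
    ∑ j ∈ s, (dist x (Q j) / ρ) ^ B * exp (-η * (dist x (Q j) - ρ)) ≤
      5 ^ finrank ℝ E * exp (finrank ℝ E + B + 1) * (1 - exp (-1))⁻¹ := by
  set n := finrank ℝ E
  set m : ι → ℕ := fun j => ⌊dist x (Q j) / ρ⌋₊
  have hterm (j : ι) (hj : j ∈ s) : (dist x (Q j) / ρ) ^ B * exp (-η * (dist x (Q j) - ρ)) ≤
      5 ^ n * exp (n + B + 1) * (exp (-1) ^ m j / (2 * m j + 3) ^ n) := by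
    have hdist : -η * (dist x (Q j) - ρ) = -(η * ρ) * (dist x (Q j) / ρ - 1) := by field_simp
    rw [hdist]
    exact rpow_mul_exp_neg_le_shell_weight hB hηρ ((one_le_div hρ).mpr (hs j hj))
  have hq : exp (-1) < 1 := exp_lt_one_iff.mpr (by norm_num)
  have hgeom : ∑ k ∈ s.image m, exp (-1) ^ k ≤ (1 - exp (-1))⁻¹ :=
    (summable_geometric_of_lt_one (exp_pos _).le hq).sum_le_tsum _ (fun _ _ => by positivity)
      |>.trans_eq (tsum_geometric_of_lt_one (exp_pos _).le hq)
  calc _ ≤ ∑ j ∈ s, 5 ^ n * exp (n + B + 1) * (exp (-1) ^ m j / (2 * m j + 3) ^ n) :=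
        sum_le_sum hterm
    _ = 5 ^ n * exp (n + B + 1) * ∑ j ∈ s, exp (-1) ^ m j / (2 * (m j : ℝ) + 3) ^ n :=
        (mul_sum ..).symm
    _ ≤ 5 ^ n * exp (n + B + 1) * (1 - exp (-1))⁻¹ := by
      gcongr
      exact (sum_div_le_sum_image_of_card_fiber_le s m (a := (exp (-1) ^ ·))
        (c := fun k => (2 * (k : ℝ) + 3) ^ n) (fun _ _ => by positivity)
        (fun k _ => card_shell_le_of_pairwise_le_dist hρ hQ s x k)).trans hgeom

end Packing

theorem stmt_2_general (N : ℕ) (Γ : ℝ → ℝ) (b η : ℝ) (hη : 0 < η)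
    (hasymp : ∃ c₁ c₂ r₀ : ℝ, 0 < c₁ ∧ 0 < c₂ ∧
      ∀ r : ℝ, r₀ ≤ r →
        c₁ * r ^ b * Real.exp (-η * r) ≤ Γ r ∧ Γ r ≤ c₂ * r ^ b * Real.exp (-η * r)) :
    ∃ ρ₀ C : ℝ, 0 < ρ₀ ∧ 0 < C ∧
      ∀ (K : ℕ), 0 < K →
        ∀ (Q : Fin K → EuclideanSpace ℝ (Fin N)) (ρ : ℝ), ρ₀ ≤ ρ →
          (∀ j l : Fin K, j ≠ l → ρ ≤ dist (Q j) (Q l)) →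
          ∀ j₀ : Fin K,
            ∑ j ∈ Finset.univ.filter (· ≠ j₀), Γ (dist (Q j₀) (Q j)) ≤ C * Γ ρ := by
  obtain ⟨c₁, c₂, r₀, hc₁, hc₂, hΓ⟩ := hasymp
  set B := max b 0
  have hρ₀ : 0 < (N + B + 1) / η := by positivity
  refine ⟨max r₀ ((N + B + 1) / η), c₂ / c₁ * (5 ^ N * exp (N + B + 1) * (1 - exp (-1))⁻¹),
    hρ₀.trans_le (le_max_right _ _), ?_, fun K _ Q ρ hρ hQ j₀ => ?_⟩
  · have : 0 < 1 - exp (-1) := sub_pos.mpr (exp_lt_one_iff.mpr (by norm_num))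
    positivity
  have hρr₀ : r₀ ≤ ρ := (le_max_left _ _).trans hρ
  have hρ0 : 0 < ρ := hρ₀.trans_le ((le_max_right _ _).trans hρ)
  have hηρ : N + B + 1 ≤ η * ρ := by
    rw [mul_comm, ← div_le_iff₀ hη]; exact (le_max_right _ _).trans hρ
  have hfar : ∀ j ∈ Finset.univ.filter (· ≠ j₀), ρ ≤ dist (Q j₀) (Q j) :=
    fun j hj => hQ j₀ j (Ne.symm (mem_filter.mp hj).2)
  have hlattice := sum_rpow_mul_exp_le_of_pairwise_le_dist hρ0 (le_max_right b 0)
    (by rwa [finrank_euclideanSpace_fin]) (fun j l hjl => hQ j l hjl) hfar (η := η)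
  rw [finrank_euclideanSpace_fin] at hlattice
  have hΓρ : 0 ≤ Γ ρ := (by positivity : 0 ≤ c₁ * ρ ^ b * exp (-η * ρ)).trans (hΓ ρ hρr₀).1
  calc _ ≤ ∑ j ∈ Finset.univ.filter (· ≠ j₀), c₂ / c₁ * Γ ρ *
        ((dist (Q j₀) (Q j) / ρ) ^ B * exp (-η * (dist (Q j₀) (Q j) - ρ))) :=
        sum_le_sum fun j hj => le_mul_rpow_mul_exp_of_asymptotics hc₁ hc₂.le hρ0 (hfar j hj)
          (le_max_left b 0) (hΓ ρ hρr₀).1 (hΓ _ (hρr₀.trans (hfar j hj))).2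
    _ = c₂ / c₁ * Γ ρ * ∑ j ∈ Finset.univ.filter (· ≠ j₀),
        (dist (Q j₀) (Q j) / ρ) ^ B * exp (-η * (dist (Q j₀) (Q j) - ρ)) := (mul_sum ..).symm
    _ ≤ c₂ / c₁ * Γ ρ * (5 ^ N * exp (N + B + 1) * (1 - exp (-1))⁻¹) := by gcongr
    _ = _ := mul_right_comm ..

theorem stmt_2 (N : ℕ) (Γ : ℝ → ℝ) (b η : ℝ) (hη : 0 < η)
    (hpos : ∀ r : ℝ, 0 ≤ r → 0 < Γ r)
    (hdec : ∀ r s : ℝ, 0 ≤ r → r ≤ s → Γ s ≤ Γ r)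
    (hasymp : ∃ c₁ c₂ r₀ : ℝ, 0 < c₁ ∧ 0 < c₂ ∧
      ∀ r : ℝ, r₀ ≤ r →
        c₁ * r ^ b * Real.exp (-η * r) ≤ Γ r ∧ Γ r ≤ c₂ * r ^ b * Real.exp (-η * r)) :
    ∃ ρ₀ C : ℝ, 0 < ρ₀ ∧ 0 < C ∧
      ∀ (K : ℕ), 0 < K →
        ∀ (Q : Fin K → EuclideanSpace ℝ (Fin N)) (ρ : ℝ), ρ₀ ≤ ρ →
          (∀ j l : Fin K, j ≠ l → ρ ≤ dist (Q j) (Q l)) →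
          ∀ j₀ : Fin K,
            ∑ j ∈ Finset.univ.filter (· ≠ j₀), Γ (dist (Q j₀) (Q j)) ≤ C * Γ ρ :=
  stmt_2_general N Γ b η hη hasymp
end

section
/- Let Γ : [0,∞) → (0,∞) be decreasing with Γ(r) ∼ r^b e^{−ηr} as r → ∞ (b ∈ ℝ, η > 0). Then there exist ρ₀ > 0 and C > 0 independent of K such that for all K, ℓ ∈ ℕ₊, all Q_1,…,Q_K ∈ ℝ^N with ρ ≥ ρ₀, and all x with |x − Q_{j₀}| = min_j |x − Q_j| ≤ ℓρ/2, one has Σ_{j=1}^K Γ(|x − Q_j|) ≤ C ℓ^{N−1} Γ(|x − Q_{j₀}|). -/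
/-!
The two-sided asymptotics give a uniform decay estimate `Γ t ≤ C₀ Γ s e^{-η (t - s) / 2}` for
`max r₀ 1 ≤ s ≤ t`: the polynomial factor `(t / s) ^ b` is absorbed by half of the exponential.
Put `s = max (|x - Q j₀|) (ρ / 2) ≤ ℓ ρ / 2`; every other `Q j` lies at distance at least `s`
from `x`. The balls of radius `ρ / 2` around the `Q j` are disjoint, so comparing volumes shows
that the shell `s + m ρ / 2 ≤ |x - Q j| ≤ s + (m + 1) ρ / 2` contains at most
`3 N ℓ ^ (N - 1) (m + 3) ^ (N - 1)` of them, while each of these contributes at most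
`C₀ Γ (|x - Q j₀|) q ^ m` with `q = e^{-η ρ₀ / 4} < 1`. Summing over `m` gives a convergent series
independent of `K`, `ℓ` and the configuration.
-/

open Real Metric MeasureTheory Module Finset

theorem card_mul_pow_le_of_pairwise_dist_le {E ι : Type*} [NormedAddCommGroup E]
    [NormedSpace ℝ E] [FiniteDimensional ℝ E] (S : Finset ι) (Q : ι → E) (x : E)
    {r a c : ℝ} (hr : 0 < r) (hra : r ≤ a) (hac : a ≤ c)
    (hsep : (S : Set ι).Pairwise fun j l => 2 * r ≤ dist (Q j) (Q l))
    (hS : ∀ j ∈ S, a ≤ dist x (Q j) ∧ dist x (Q j) ≤ c) :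
    #S * r ^ finrank ℝ E ≤ (c + r) ^ finrank ℝ E - (a - r) ^ finrank ℝ E := by
  borelize E
  set μ : Measure E := Measure.addHaar
  have hv0 : μ (ball 0 1) ≠ 0 := (measure_ball_pos μ 0 one_pos).ne'
  have hvt : μ (ball 0 1) ≠ ⊤ := measure_ball_lt_top.ne
  have hdisj : (S : Set ι).PairwiseDisjoint fun j => ball (Q j) r :=
    fun j hj l hl hjl => ball_disjoint_ball (by linarith [hsep hj hl hjl])
  have hinner : Disjoint (closedBall x (a - r)) (⋃ j ∈ S, ball (Q j) r) := by
    simp only [Set.disjoint_iUnion_right]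
    intro j hj
    refine closedBall_disjoint_ball ?_
    linarith [(hS j hj).1]
  have hsub : (⋃ j ∈ S, ball (Q j) r) ⊆ ball x (c + r) := by
    simp only [Set.iUnion_subset_iff]
    intro j hj
    refine ball_subset_ball' ?_
    linarith [(hS j hj).2, dist_comm x (Q j)]
  -- `closedBall`, not `ball`: its volume formula also holds at radius `0` when `finrank ℝ E = 0`
  have key : μ (closedBall x (a - r)) + μ (⋃ j ∈ S, ball (Q j) r) ≤ μ (ball x (c + r)) := by
    rw [← measure_union hinner (S.measurableSet_biUnion fun _ _ => measurableSet_ball)]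
    exact measure_mono (Set.union_subset (closedBall_subset_ball (by linarith)) hsub)
  rw [Measure.addHaar_closedBall μ x (by linarith), Measure.addHaar_ball_of_pos μ x (by linarith),
    measure_biUnion_finset hdisj fun _ _ => measurableSet_ball] at key
  simp only [Measure.addHaar_ball_of_pos μ _ hr, sum_const, nsmul_eq_mul, ← mul_assoc,
    ← add_mul] at key
  have hinner_nonneg : 0 ≤ (a - r) ^ finrank ℝ E := pow_nonneg (by linarith) _
  rw [ENNReal.mul_le_mul_iff_left hv0 hvt, ← ENNReal.ofReal_natCast,
    ← ENNReal.ofReal_mul (by positivity), ← ENNReal.ofReal_add hinner_nonneg (by positivity),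
    ENNReal.ofReal_le_ofReal_iff (pow_nonneg (by linarith) _)] at key
  linarith

theorem card_le_of_dist_mem_shell {E ι : Type*} [NormedAddCommGroup E]
    [NormedSpace ℝ E] [FiniteDimensional ℝ E] (S : Finset ι) (Q : ι → E) (x : E)
    {r s ℓ : ℝ} (m : ℕ) (hr : 0 < r) (hrs : r ≤ s) (hsℓ : s ≤ ℓ * r)
    (hsep : (S : Set ι).Pairwise fun j l => 2 * r ≤ dist (Q j) (Q l))
    (hS : ∀ j ∈ S, s + m * r ≤ dist x (Q j) ∧ dist x (Q j) ≤ s + (m + 1) * r) :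
    (#S : ℝ) ≤ 3 * finrank ℝ E * ℓ ^ (finrank ℝ E - 1) * (m + 3) ^ (finrank ℝ E - 1) := by
  have hpack := card_mul_pow_le_of_pairwise_dist_le S Q x hr
    (by nlinarith [m.cast_nonneg (α := ℝ)]) (by linarith) hsep hS
  set d := finrank ℝ E
  have houter : s + (m + 1) * r + r ≤ ℓ * (m + 3) * r := by nlinarith [m.cast_nonneg (α := ℝ)]
  have hinner : 0 ≤ s + m * r - r := by nlinarith [m.cast_nonneg (α := ℝ)]
  have houter_nonneg : 0 ≤ s + (m + 1) * r + r := by linarith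
  have hdiff : (s + (m + 1) * r + r) ^ d - (s + m * r - r) ^ d
      ≤ 3 * r * d * (ℓ * (m + 3) * r) ^ (d - 1) := by
    calc _ ≤ |(s + (m + 1) * r + r) ^ d - (s + m * r - r) ^ d| := le_abs_self _
      _ ≤ |(s + (m + 1) * r + r) - (s + m * r - r)| * d
            * max |s + (m + 1) * r + r| |s + m * r - r| ^ (d - 1) := abs_pow_sub_pow_le ..
      _ = 3 * r * d * (s + (m + 1) * r + r) ^ (d - 1) := by
        rw [abs_of_nonneg hinner, abs_of_nonneg houter_nonneg, max_eq_left (by linarith),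
          show s + (m + 1) * r + r - (s + m * r - r) = 3 * r by ring, abs_of_pos (by linarith)]
      _ ≤ 3 * r * d * (ℓ * (m + 3) * r) ^ (d - 1) := by gcongr
  rcases Nat.eq_zero_or_pos d with hd | hd
  · simp [hd] at hpack ⊢
    exact hpack
  · refine le_of_mul_le_mul_right ?_ (pow_pos hr d)
    calc (#S : ℝ) * r ^ d ≤ 3 * r * d * (ℓ * (m + 3) * r) ^ (d - 1) := hpack.trans hdiff
      _ = 3 * d * ℓ ^ (d - 1) * (m + 3) ^ (d - 1) * (r * r ^ (d - 1)) := by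
        rw [mul_pow, mul_pow]; ring
      _ = _ := by rw [← pow_succ', Nat.sub_add_cancel hd]

theorem div_rpow_le_mul_exp (b : ℝ) {κ s t : ℝ} (hκ : 0 < κ) (hs : 1 ≤ s) (hst : s ≤ t) :
    (t / s) ^ b ≤ (1 + max b 0 / κ) ^ max b 0 * exp (κ * (t - s)) := by
  have hts : 1 ≤ t / s := (one_le_div (by linarith)).mpr hst
  rcases le_or_gt b 0 with hb | hb
  · rw [max_eq_right hb, rpow_zero, one_mul]
    exact (rpow_le_one_of_one_le_of_nonpos hts hb).trans (one_le_exp (by nlinarith))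
  · rw [max_eq_left hb.le]
    -- `1 + u ≤ (1 + 1 / λ) e^{λ u}` with `λ = κ / b`, raised to the power `b`
    have hbase : t / s ≤ (1 + b / κ) * exp (κ / b * (t - s)) := by
      have h1 : t / s ≤ 1 + (t - s) := by
        rw [div_le_iff₀ (by linarith)]; nlinarith
      have h2 : (1 + b / κ) * (κ / b * (t - s) + 1)
          = 1 + (t - s) + κ / b * (t - s) + b / κ := by
        field_simp; ring
      have h3 : 0 ≤ κ / b * (t - s) := mul_nonneg (by positivity) (by linarith)
      have h4 := mul_le_mul_of_nonneg_left (add_one_le_exp (κ / b * (t - s)))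
        (by positivity : (0:ℝ) ≤ 1 + b / κ)
      have h5 : 0 ≤ b / κ := by positivity
      linarith
    calc (t / s) ^ b ≤ ((1 + b / κ) * exp (κ / b * (t - s))) ^ b := by gcongr
      _ = (1 + b / κ) ^ b * exp (κ * (t - s)) := by
        rw [mul_rpow (by positivity) (exp_pos _).le, ← exp_mul]
        field_simp

theorem exists_le_mul_exp_of_rpow_mul_exp_bounds {Γ : ℝ → ℝ} {b η c₁ c₂ r₀ : ℝ} (hη : 0 < η)
    (hc₁ : 0 < c₁) (hc₂ : 0 < c₂)
    (hΓ : ∀ r, r₀ ≤ r → c₁ * r ^ b * exp (-η * r) ≤ Γ r ∧ Γ r ≤ c₂ * r ^ b * exp (-η * r)) :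
    ∃ C₀, 0 ≤ C₀ ∧ ∀ s t, max r₀ 1 ≤ s → s ≤ t → Γ t ≤ C₀ * Γ s * exp (-(η / 2) * (t - s)) := by
  set M := (1 + max b 0 / (η / 2)) ^ max b 0
  refine ⟨c₂ / c₁ * M, by positivity, fun s t hs hst => ?_⟩
  have hs₀ : 0 < s := by linarith [le_max_right r₀ 1]
  have hexp :
      exp (η / 2 * (t - s)) * exp (-η * t) = exp (-η * s) * exp (-(η / 2) * (t - s)) := by
    rw [← exp_add, ← exp_add]; ring_nf
  calc Γ t ≤ c₂ * t ^ b * exp (-η * t) := (hΓ t (by linarith [le_max_left r₀ 1])).2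
    _ = c₂ * s ^ b * (t / s) ^ b * exp (-η * t) := by
      rw [div_rpow (by linarith) hs₀.le]; field_simp
    _ ≤ c₂ * s ^ b * (M * exp (η / 2 * (t - s))) * exp (-η * t) := by
      gcongr; exact div_rpow_le_mul_exp b (by positivity) (by linarith [le_max_right r₀ 1]) hst
    _ = c₂ / c₁ * M * (c₁ * s ^ b * exp (-η * s)) * exp (-(η / 2) * (t - s)) := by
      rw [mul_assoc _ (M * _), mul_assoc M, hexp]; field_simp
    _ ≤ c₂ / c₁ * M * Γ s * exp (-(η / 2) * (t - s)) := by
      gcongr; exact (hΓ s (le_trans (le_max_left r₀ 1) hs)).1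

theorem summable_add_pow_mul_geometric (p k : ℕ) {q : ℝ} (hq₀ : 0 < q) (hq₁ : q < 1) :
    Summable fun n : ℕ => ((n : ℝ) + k) ^ p * q ^ n := by
  have h := (summable_nat_add_iff (f := fun n : ℕ => (n : ℝ) ^ p * q ^ n) k).mpr
    (summable_pow_mul_geometric_of_norm_lt_one p (by rwa [Real.norm_of_nonneg hq₀.le]))
  refine (h.div_const (q ^ k)).congr fun n => ?_
  push_cast
  rw [pow_add, ← mul_assoc, mul_div_cancel_right₀ _ (pow_ne_zero k hq₀.ne')]

theorem Finset.sum_le_tsum_of_sum_fiber_le {ι : Type*} (S : Finset ι) (f : ι → ℝ) (m : ι → ℕ)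
    {g : ℕ → ℝ} (hg : Summable g) (hg₀ : ∀ n, 0 ≤ g n)
    (hfib : ∀ n, ∑ j ∈ S with m j = n, f j ≤ g n) : ∑ j ∈ S, f j ≤ ∑' n, g n := by
  rw [← sum_fiberwise_of_maps_to fun j hj => mem_image_of_mem m hj]
  exact (sum_le_sum fun n _ => hfib n).trans (hg.sum_le_tsum _ fun n _ => hg₀ n)

theorem sum_le_of_pairwise_dist_le_of_decay {E ι : Type*} [NormedAddCommGroup E]
    [NormedSpace ℝ E] [FiniteDimensional ℝ E] (S : Finset ι) (Q : ι → E) (x : E)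
    {Γ : ℝ → ℝ} {C₀ κ R r s ℓ : ℝ} (hκ : 0 < κ) (hR : 0 < R) (hRr : R ≤ r) (hrs : r ≤ s)
    (hsℓ : s ≤ ℓ * r) (hC₀ : 0 ≤ C₀) (hΓs : 0 ≤ Γ s)
    (hdecay : ∀ t, s ≤ t → Γ t ≤ C₀ * Γ s * exp (-κ * (t - s)))
    (hsep : (S : Set ι).Pairwise fun j l => 2 * r ≤ dist (Q j) (Q l))
    (hS : ∀ j ∈ S, s ≤ dist x (Q j)) :
    ∑ j ∈ S, Γ (dist x (Q j)) ≤ 3 * finrank ℝ E * ℓ ^ (finrank ℝ E - 1) * (C₀ * Γ s) *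
      ∑' n : ℕ, ((n : ℝ) + 3) ^ (finrank ℝ E - 1) * exp (-κ * R) ^ n := by
  set d := finrank ℝ E
  set q := exp (-κ * R)
  have hr : 0 < r := by linarith
  have hℓ : 0 ≤ ℓ := by nlinarith
  set m : ι → ℕ := fun j => ⌊(dist x (Q j) - s) / r⌋₊
  have hshell : ∀ j ∈ S, s + m j * r ≤ dist x (Q j) ∧ dist x (Q j) ≤ s + (m j + 1) * r := by
    intro j hj
    have hlo := Nat.floor_le (div_nonneg (sub_nonneg.mpr (hS j hj)) hr.le)
    have hhi := Nat.lt_floor_add_one ((dist x (Q j) - s) / r)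
    rw [le_div_iff₀ hr] at hlo
    rw [div_lt_iff₀ hr] at hhi
    constructor <;> linarith
  have hval : ∀ j ∈ S, Γ (dist x (Q j)) ≤ C₀ * Γ s * q ^ m j := by
    intro j hj
    refine (hdecay _ (hS j hj)).trans (mul_le_mul_of_nonneg_left ?_ (by positivity))
    rw [← exp_nat_mul, exp_le_exp]
    nlinarith [(hshell j hj).1, mul_le_mul_of_nonneg_left hRr (m j).cast_nonneg]
  rw [← tsum_mul_left]
  refine sum_le_tsum_of_sum_fiber_le S _ m
    ((summable_add_pow_mul_geometric _ 3 (exp_pos _)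
      (exp_lt_one_iff.mpr (by nlinarith))).mul_left _)
    (fun n => by positivity) fun n => ?_
  calc ∑ j ∈ S with m j = n, Γ (dist x (Q j))
      ≤ #{j ∈ S | m j = n} * (C₀ * Γ s * q ^ n) := by
        rw [← nsmul_eq_mul]
        refine sum_le_card_nsmul _ _ _ fun j hj => ?_
        obtain ⟨hjS, rfl⟩ := mem_filter.mp hj
        exact hval j hjS
    _ ≤ 3 * d * ℓ ^ (d - 1) * (n + 3) ^ (d - 1) * (C₀ * Γ s * q ^ n) := by
        gcongr
        refine card_le_of_dist_mem_shell _ Q x n hr hrs hsℓ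
          (hsep.mono fun j hj => (mem_filter.mp hj).1) fun j hj => ?_
        obtain ⟨hjS, rfl⟩ := mem_filter.mp hj
        exact hshell j hjS
    _ = 3 * d * ℓ ^ (d - 1) * (C₀ * Γ s) * (((n : ℝ) + 3) ^ (d - 1) * q ^ n) := by ring

theorem stmt_3 (N : ℕ) (Γ : ℝ → ℝ) (b η : ℝ) (hη : 0 < η)
    (hpos : ∀ r : ℝ, 0 ≤ r → 0 < Γ r)
    (hdec : ∀ r s : ℝ, 0 ≤ r → r ≤ s → Γ s ≤ Γ r)
    (hasymp : ∃ c₁ c₂ r₀ : ℝ, 0 < c₁ ∧ 0 < c₂ ∧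
      ∀ r : ℝ, r₀ ≤ r →
        c₁ * r ^ b * Real.exp (-η * r) ≤ Γ r ∧ Γ r ≤ c₂ * r ^ b * Real.exp (-η * r)) :
    ∃ ρ₀ C : ℝ, 0 < ρ₀ ∧ 0 < C ∧
      ∀ (K ℓ : ℕ), 0 < K → 0 < ℓ →
        ∀ (Q : Fin K → EuclideanSpace ℝ (Fin N)) (ρ : ℝ), ρ₀ ≤ ρ →
          (∀ j l : Fin K, j ≠ l → ρ ≤ dist (Q j) (Q l)) →
          ∀ (j₀ : Fin K) (x : EuclideanSpace ℝ (Fin N)),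
            (∀ j : Fin K, dist x (Q j₀) ≤ dist x (Q j)) →
            dist x (Q j₀) ≤ (ℓ : ℝ) * ρ / 2 →
            ∑ j : Fin K, Γ (dist x (Q j)) ≤ C * (ℓ : ℝ) ^ (N - 1) * Γ (dist x (Q j₀)) := by
  obtain ⟨c₁, c₂, r₀, hc₁, hc₂, hΓ⟩ := hasymp
  obtain ⟨C₀, hC₀, hdecay⟩ := exists_le_mul_exp_of_rpow_mul_exp_bounds hη hc₁ hc₂ hΓ
  set R := max r₀ 1
  set T := ∑' n : ℕ, ((n : ℝ) + 3) ^ (N - 1) * exp (-(η / 2) * R) ^ n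
  have hR : 0 < R := lt_of_lt_of_le one_pos (le_max_right _ _)
  have hT : 0 ≤ T := tsum_nonneg fun n => by positivity
  refine ⟨2 * R, 1 + 3 * N * C₀ * T, by positivity, by positivity, ?_⟩
  intro K ℓ _ hℓ Q ρ hρ hsep j₀ x hmin hx
  set d₀ := dist x (Q j₀)
  set s := max d₀ (ρ / 2)
  have hℓ₁ : (1 : ℝ) ≤ ℓ := by exact_mod_cast hℓ
  have hsℓ : s ≤ ℓ * (ρ / 2) := max_le (by linarith) (by nlinarith)
  have hfar : ∀ j ∈ univ.erase j₀, s ≤ dist x (Q j) := by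
    intro j hj
    have : ρ ≤ d₀ + dist x (Q j) :=
      (hsep j₀ j (ne_of_mem_erase hj).symm).trans (dist_triangle_left _ _ x)
    exact max_le (hmin j) (by linarith [hmin j])
  have htail := sum_le_of_pairwise_dist_le_of_decay (univ.erase j₀) Q x (half_pos hη)
    hR (by linarith) (le_max_right _ _) hsℓ hC₀ (hpos s (by positivity)).le
    (hdecay s · (le_trans (by linarith) (le_max_right _ _)))
    (fun j _ l _ hjl => by linarith [hsep j l hjl]) hfar
  rw [finrank_euclideanSpace_fin] at htail
  have hΓs : Γ s ≤ Γ d₀ := hdec d₀ s dist_nonneg (le_max_left _ _)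
  have hΓd₀ := hpos d₀ dist_nonneg
  have hℓN : 1 ≤ (ℓ : ℝ) ^ (N - 1) := one_le_pow₀ hℓ₁
  rw [← sum_erase_add _ _ (mem_univ j₀)]
  calc _ ≤ 3 * N * ℓ ^ (N - 1) * (C₀ * Γ d₀) * T + Γ d₀ := by
        gcongr; exact htail.trans (by gcongr)
    _ ≤ (1 + 3 * N * C₀ * T) * ℓ ^ (N - 1) * Γ d₀ := by
        nlinarith [mul_nonneg (mul_nonneg hC₀ hT) hΓd₀.le]
end

section
/- Let Γ₁, Γ₂ be positive continuous radial functions on ℝ^N with Γ₁(r) ∼ r^{b₁} e^{−η₁ r} and Γ₂(r) ∼ r^{b₂} e^{−η₂ r} as r → ∞, where η₁ < η₂. Then as |ξ| → ∞, ∫_{ℝ^N} Γ₁(x − ξ) Γ₂(x) dx ∼ |ξ|^{b₁} e^{−η₁|ξ|}, i.e., the ratio of the two sides is bounded above and below by positive constants. -/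
/-!
With the weight `w_{b,η}(r) = (1 + r) ^ b * exp (-η r)`, which is comparable to
`r ^ b * exp (-η r)` for large `r`, continuity gives `Γᵢ ≤ Aᵢ w_{bᵢ,ηᵢ}` on all of `[0, ∞)`.
Since `|‖x - ξ‖ - ‖ξ‖| ≤ ‖x‖`, Peetre's inequality yields
`w_{b₁,η₁}(‖x - ξ‖) ≤ w_{b₁,η₁}(‖ξ‖) · (1 + ‖x‖) ^ |b₁| · exp (η₁ ‖x‖)`, so the integrand is
bounded by `w_{b₁,η₁}(‖ξ‖)` times `w_{|b₁|+b₂, η₂-η₁}(‖x‖)`, integrable because `η₁ < η₂`.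
For the lower bound, restrict to the unit ball: there the same inequality read the other way
gives `Γ₁(‖x - ξ‖) ≳ w_{b₁,η₁}(‖ξ‖)`, while `Γ₂` is bounded below by a positive constant.
-/

open Filter MeasureTheory Real Set

lemma rpow_le_two_rpow_abs_mul_rpow {u v : ℝ} (s : ℝ) (hu : 0 < u) (hv : 0 < v)
    (hvu : v ≤ 2 * u) (huv : u ≤ 2 * v) : u ^ s ≤ 2 ^ |s| * v ^ s := by
  rcases le_or_gt 0 s with hs | hs
  · calc u ^ s ≤ (2 * v) ^ s := rpow_le_rpow hu.le huv hs
      _ = 2 ^ s * v ^ s := mul_rpow zero_le_two hv.le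
      _ ≤ 2 ^ |s| * v ^ s := by
          gcongr
          · exact one_le_two
          · exact le_abs_self s
  · calc u ^ s ≤ (2⁻¹ * v) ^ s := rpow_le_rpow_of_nonpos (by positivity) (by linarith) hs.le
      _ = 2 ^ |s| * v ^ s := by
          rw [mul_rpow (by norm_num) hv.le, inv_rpow zero_le_two, ← rpow_neg zero_le_two,
            abs_of_neg hs]

/-- Peetre's inequality. -/
lemma one_add_rpow_le_mul_one_add_rpow_abs {u v t : ℝ} (s : ℝ) (hu : 0 ≤ u) (hv : 0 ≤ v)
    (h : |u - v| ≤ t) : (1 + u) ^ s ≤ (1 + v) ^ s * (1 + t) ^ |s| := by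
  have ht : 0 ≤ t := (abs_nonneg _).trans h
  obtain ⟨h₁, h₂⟩ := abs_le.mp h
  rcases le_or_gt 0 s with hs | hs
  · calc (1 + u) ^ s ≤ ((1 + v) * (1 + t)) ^ s := by
          gcongr; nlinarith [mul_nonneg hv ht]
      _ = (1 + v) ^ s * (1 + t) ^ |s| := by
          rw [mul_rpow (by positivity) (by positivity), abs_of_nonneg hs]
  · have key : (1 + v) * (1 + t) ^ (-1 : ℝ) ≤ 1 + u := by
      rw [rpow_neg_one, ← div_eq_mul_inv, div_le_iff₀ (by positivity)]
      nlinarith [mul_nonneg hu ht]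
    calc (1 + u) ^ s ≤ ((1 + v) * (1 + t) ^ (-1 : ℝ)) ^ s :=
          rpow_le_rpow_of_nonpos (by positivity) key hs.le
      _ = (1 + v) ^ s * (1 + t) ^ |s| := by
          rw [mul_rpow (by positivity) (by positivity), ← rpow_mul (by positivity),
            abs_of_neg hs, neg_one_mul]

/-- Unlike `r ^ b * exp (-η * r)`, this is positive and continuous on all of `[0, ∞)`. -/
noncomputable def polyExpWeight (b η r : ℝ) : ℝ := (1 + r) ^ b * exp (-η * r)

namespace polyExpWeight

lemma pos (b η : ℝ) {r : ℝ} (hr : 0 ≤ r) : 0 < polyExpWeight b η r := by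
  unfold polyExpWeight; positivity

lemma continuousOn (b η : ℝ) : ContinuousOn (polyExpWeight b η) (Ici 0) := by
  unfold polyExpWeight
  refine ContinuousOn.mul ?_ (by fun_prop)
  exact ContinuousOn.rpow_const (by fun_prop) fun r hr => Or.inl (by rw [mem_Ici] at hr; linarith)

lemma continuous_comp_norm {E : Type*} [SeminormedAddCommGroup E] (b η : ℝ) :
    Continuous fun x : E => polyExpWeight b η ‖x‖ :=
  (continuousOn b η).comp_continuous continuous_norm fun x => norm_nonneg x

lemma mul (b b' η η' : ℝ) {r : ℝ} (hr : 0 ≤ r) :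
    polyExpWeight b η r * polyExpWeight b' η' r = polyExpWeight (b + b') (η + η') r := by
  unfold polyExpWeight
  rw [rpow_add (by positivity), neg_add, add_mul, exp_add]
  ring

lemma le_mul {b η u v t : ℝ} (hη : 0 ≤ η) (hu : 0 ≤ u) (hv : 0 ≤ v) (h : |u - v| ≤ t) :
    polyExpWeight b η u ≤ polyExpWeight b η v * polyExpWeight |b| (-η) t := by
  have ht : 0 ≤ t := (abs_nonneg _).trans h
  have hexp : exp (-η * u) ≤ exp (-η * v) * exp (-(-η) * t) := by
    rw [← exp_add]
    gcongr
    nlinarith [(abs_le.mp h).1]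
  calc polyExpWeight b η u ≤ ((1 + v) ^ b * (1 + t) ^ |b|) * (exp (-η * v) * exp (-(-η) * t)) :=
        mul_le_mul (one_add_rpow_le_mul_one_add_rpow_abs b hu hv h) hexp (by positivity)
          (by positivity)
    _ = _ := by unfold polyExpWeight; ring

lemma monotoneOn {b η : ℝ} (hb : 0 ≤ b) (hη : η ≤ 0) : MonotoneOn (polyExpWeight b η) (Ici 0) := by
  intro t ht s hs hts
  unfold polyExpWeight
  simp only [mem_Ici] at ht hs
  gcongr
  nlinarith

lemma rpow_mul_exp_le (b η : ℝ) {r : ℝ} (hr : 1 ≤ r) :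
    r ^ b * exp (-η * r) ≤ 2 ^ |b| * polyExpWeight b η r := by
  unfold polyExpWeight
  rw [← mul_assoc]
  gcongr
  exact rpow_le_two_rpow_abs_mul_rpow b (by positivity) (by positivity) (by linarith) (by linarith)

lemma le_rpow_mul_exp (b η : ℝ) {r : ℝ} (hr : 1 ≤ r) :
    polyExpWeight b η r ≤ 2 ^ |b| * (r ^ b * exp (-η * r)) := by
  unfold polyExpWeight
  rw [← mul_assoc]
  gcongr
  exact rpow_le_two_rpow_abs_mul_rpow b (by positivity) (by positivity) (by linarith) (by linarith)

lemma isBigO_atTop (b r : ℝ) {η : ℝ} (hη : 0 < η) :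
    polyExpWeight b η =O[atTop] fun t => (1 + t) ^ (-r) := by
  have hlim : Tendsto (fun t : ℝ => (1 + t) ^ (b + r) * exp (-η * (1 + t))) atTop (nhds 0) :=
    (tendsto_rpow_mul_exp_neg_mul_atTop_nhds_zero (b + r) η hη).comp
      (tendsto_atTop_add_const_left _ 1 tendsto_id)
  have hO := (hlim.isBigO_one ℝ).const_mul_left (exp η) |>.mul
    (Asymptotics.isBigO_refl (fun t : ℝ => (1 + t) ^ (-r)) atTop)
  simp only [one_mul] at hO
  refine hO.congr' ?_ EventuallyEq.rfl
  filter_upwards [eventually_ge_atTop 0] with t ht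
  unfold polyExpWeight
  rw [rpow_add (by positivity), rpow_neg (by positivity)]
  have : exp η * exp (-η * (1 + t)) = exp (-η * t) := by rw [← exp_add]; ring_nf
  rw [← this]
  field_simp

end polyExpWeight

lemma exists_forall_nonneg_le_mul {Γ g : ℝ → ℝ} (hΓ : ContinuousOn Γ (Ici 0))
    (hg : ContinuousOn g (Ici 0)) (hg0 : ∀ r, 0 ≤ r → 0 < g r) {c r₀ : ℝ}
    (h : ∀ r, r₀ ≤ r → Γ r ≤ c * g r) : ∃ A, 0 ≤ A ∧ ∀ r, 0 ≤ r → Γ r ≤ A * g r := by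
  have hsub : Icc 0 (max r₀ 0) ⊆ Ici 0 := Icc_subset_Ici_self
  obtain ⟨M, hM⟩ := isCompact_Icc.exists_bound_of_continuousOn
    ((hΓ.mono hsub).div (hg.mono hsub) fun r hr => (hg0 r hr.1).ne')
  refine ⟨max (max M c) 0, le_max_right _ _, fun r hr => ?_⟩
  rcases le_total r (max r₀ 0) with hle | hle
  · have hMr : Γ r / g r ≤ M := (le_abs_self _).trans (hM r ⟨hr, hle⟩)
    rw [div_le_iff₀ (hg0 r hr)] at hMr
    exact hMr.trans (by gcongr; exacts [(hg0 r hr).le, (le_max_left _ _).trans (le_max_left _ _)])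
  · calc Γ r ≤ c * g r := h r ((le_max_left _ _).trans hle)
      _ ≤ max (max M c) 0 * g r := by
          gcongr; exacts [(hg0 r hr).le, (le_max_right _ _).trans (le_max_left _ _)]

lemma exists_le_polyExpWeight {Γ : ℝ → ℝ} (hΓ : Continuous Γ) {b η c r₀ : ℝ} (hc : 0 ≤ c)
    (h : ∀ r, r₀ ≤ r → Γ r ≤ c * r ^ b * exp (-η * r)) :
    ∃ A, 0 ≤ A ∧ ∀ r, 0 ≤ r → Γ r ≤ A * polyExpWeight b η r := by
  refine exists_forall_nonneg_le_mul hΓ.continuousOn (polyExpWeight.continuousOn b η)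
    (fun r hr => polyExpWeight.pos b η hr) (c := c * 2 ^ |b|) (r₀ := max r₀ 1) fun r hr => ?_
  calc Γ r ≤ c * (r ^ b * exp (-η * r)) := by
        rw [← mul_assoc]; exact h r ((le_max_left _ _).trans hr)
    _ ≤ c * (2 ^ |b| * polyExpWeight b η r) :=
        mul_le_mul_of_nonneg_left
          (polyExpWeight.rpow_mul_exp_le b η ((le_max_right _ _).trans hr)) hc
    _ = c * 2 ^ |b| * polyExpWeight b η r := by ring

lemma exists_polyExpWeight_le {Γ : ℝ → ℝ} {b η c r₀ : ℝ} (hc : 0 < c)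
    (h : ∀ r, r₀ ≤ r → c * r ^ b * exp (-η * r) ≤ Γ r) :
    ∃ a R, 0 < a ∧ ∀ r, R ≤ r → a * polyExpWeight b η r ≤ Γ r := by
  refine ⟨c / 2 ^ |b|, max r₀ 1, by positivity, fun r hr => ?_⟩
  calc c / 2 ^ |b| * polyExpWeight b η r ≤ c / 2 ^ |b| * (2 ^ |b| * (r ^ b * exp (-η * r))) := by
        gcongr; exact polyExpWeight.le_rpow_mul_exp b η ((le_max_right _ _).trans hr)
    _ = c * r ^ b * exp (-η * r) := by field_simp
    _ ≤ Γ r := h r ((le_max_left _ _).trans hr)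

lemma exists_one_le_bounds_rpow_mul_exp {ι : Type*} {F ρ : ι → ℝ} {b η κ K R : ℝ}
    (hκ : 0 < κ) (hR : 1 ≤ R)
    (h : ∀ i, R ≤ ρ i → κ * polyExpWeight b η (ρ i) ≤ F i ∧ F i ≤ K * polyExpWeight b η (ρ i)) :
    ∃ C, 1 ≤ C ∧ ∀ i, R ≤ ρ i →
      1 / C * (ρ i ^ b * exp (-η * ρ i)) ≤ F i ∧ F i ≤ C * (ρ i ^ b * exp (-η * ρ i)) := by
  set C := max 1 (max (2 ^ |b| * K) (2 ^ |b| / κ))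
  have hC : 1 ≤ C := le_max_left _ _
  refine ⟨C, hC, fun i hi => ?_⟩
  have hρ : 1 ≤ ρ i := hR.trans hi
  have hΦ : 0 ≤ ρ i ^ b * exp (-η * ρ i) := by positivity
  obtain ⟨hlow, hup⟩ := h i hi
  have hK : 0 ≤ K := hκ.le.trans <|
    le_of_mul_le_mul_right (hlow.trans hup) (polyExpWeight.pos b η (by linarith))
  constructor
  · calc 1 / C * (ρ i ^ b * exp (-η * ρ i))
        ≤ κ / 2 ^ |b| * (ρ i ^ b * exp (-η * ρ i)) := by
          refine mul_le_mul_of_nonneg_right ?_ hΦ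
          rw [one_div_le (by positivity) (by positivity), one_div_div]
          exact (le_max_right _ _).trans (le_max_right _ _)
      _ ≤ κ / 2 ^ |b| * (2 ^ |b| * polyExpWeight b η (ρ i)) :=
          mul_le_mul_of_nonneg_left (polyExpWeight.rpow_mul_exp_le b η hρ) (by positivity)
      _ = κ * polyExpWeight b η (ρ i) := by field_simp
      _ ≤ F i := hlow
  · calc F i ≤ K * polyExpWeight b η (ρ i) := hup
      _ ≤ K * (2 ^ |b| * (ρ i ^ b * exp (-η * ρ i))) :=
          mul_le_mul_of_nonneg_left (polyExpWeight.le_rpow_mul_exp b η hρ) hK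
      _ = 2 ^ |b| * K * (ρ i ^ b * exp (-η * ρ i)) := by ring
      _ ≤ C * (ρ i ^ b * exp (-η * ρ i)) := by
          gcongr; exact (le_max_left _ _).trans (le_max_right _ _)

section Convolution

variable {E : Type*} [NormedAddCommGroup E]

lemma abs_norm_sub_sub_norm_le (x ξ : E) : |‖x - ξ‖ - ‖ξ‖| ≤ ‖x‖ := by
  simpa using abs_norm_sub_norm_le (x - ξ) (-ξ)

variable {Γ₁ Γ₂ : ℝ → ℝ} {A₁ A₂ b₁ b₂ η₁ η₂ : ℝ}

lemma mul_norm_sub_le_polyExpWeight (hΓ₁ : ∀ r, 0 ≤ r → Γ₁ r ≤ A₁ * polyExpWeight b₁ η₁ r)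
    (hΓ₂ : ∀ r, 0 ≤ r → Γ₂ r ≤ A₂ * polyExpWeight b₂ η₂ r) (hΓ₂0 : ∀ r, 0 ≤ r → 0 ≤ Γ₂ r)
    (hA₁ : 0 ≤ A₁) (hη₁ : 0 ≤ η₁) (x ξ : E) :
    Γ₁ ‖x - ξ‖ * Γ₂ ‖x‖ ≤
      A₁ * A₂ * polyExpWeight b₁ η₁ ‖ξ‖ * polyExpWeight (|b₁| + b₂) (η₂ - η₁) ‖x‖ := by
  have hx := norm_nonneg x
  calc Γ₁ ‖x - ξ‖ * Γ₂ ‖x‖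
      ≤ (A₁ * (polyExpWeight b₁ η₁ ‖ξ‖ * polyExpWeight |b₁| (-η₁) ‖x‖)) *
          (A₂ * polyExpWeight b₂ η₂ ‖x‖) := by
        refine mul_le_mul ((hΓ₁ _ (norm_nonneg _)).trans ?_) (hΓ₂ _ hx) (hΓ₂0 _ hx) ?_
        · exact mul_le_mul_of_nonneg_left (polyExpWeight.le_mul hη₁ (norm_nonneg _)
            (norm_nonneg _) (abs_norm_sub_sub_norm_le x ξ)) hA₁
        · have := polyExpWeight.pos b₁ η₁ (norm_nonneg ξ)
          have := polyExpWeight.pos |b₁| (-η₁) hx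
          positivity
    _ = A₁ * A₂ * polyExpWeight b₁ η₁ ‖ξ‖ * polyExpWeight (|b₁| + b₂) (η₂ - η₁) ‖x‖ := by
        rw [sub_eq_neg_add, ← polyExpWeight.mul _ _ _ _ hx]; ring

variable [NormedSpace ℝ E] [FiniteDimensional ℝ E] [MeasurableSpace E] [BorelSpace E]
  {μ : Measure E} [μ.IsAddHaarMeasure]

lemma integrable_polyExpWeight_norm (b : ℝ) {η : ℝ} (hη : 0 < η) :
    Integrable (fun x : E => polyExpWeight b η ‖x‖) μ := by
  have hdim : (Module.finrank ℝ E : ℝ) < Module.finrank ℝ E + 1 := lt_add_one _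
  exact (polyExpWeight.continuous_comp_norm b η).locallyIntegrable.integrable_of_isBigO_cocompact
    ((polyExpWeight.isBigO_atTop b _ hη).comp_tendsto tendsto_norm_cocompact_atTop)
    ((integrable_one_add_norm hdim).integrableAtFilter _)

lemma polyExpWeight_mul_le_integral {a m r₀ : ℝ} (hΓ₁ : ∀ r, r₀ ≤ r → a * polyExpWeight b₁ η₁ r ≤ Γ₁ r)
    (hΓ₂ : ∀ r ∈ Icc 0 1, m ≤ Γ₂ r) (hΓ₁0 : ∀ r, 0 ≤ r → 0 ≤ Γ₁ r)
    (hΓ₂0 : ∀ r, 0 ≤ r → 0 ≤ Γ₂ r) (ha : 0 ≤ a) (hm : 0 ≤ m) (hη₁ : 0 ≤ η₁) {ξ : E}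
    (hξ : r₀ + 1 ≤ ‖ξ‖) (hint : Integrable (fun x => Γ₁ ‖x - ξ‖ * Γ₂ ‖x‖) μ) :
    a * m * μ.real (Metric.closedBall 0 1) / polyExpWeight |b₁| (-η₁) 1 *
      polyExpWeight b₁ η₁ ‖ξ‖ ≤ ∫ x, Γ₁ ‖x - ξ‖ * Γ₂ ‖x‖ ∂μ := by
  have hw₁ : 0 < polyExpWeight |b₁| (-η₁) 1 := polyExpWeight.pos _ _ zero_le_one
  have hball : ∀ x ∈ Metric.closedBall (0 : E) 1,
      a * polyExpWeight b₁ η₁ ‖ξ‖ / polyExpWeight |b₁| (-η₁) 1 * m ≤ Γ₁ ‖x - ξ‖ * Γ₂ ‖x‖ := by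
    intro x hx
    rw [mem_closedBall_zero_iff] at hx
    have hdist : |‖ξ‖ - ‖x - ξ‖| ≤ ‖x‖ := abs_sub_comm ‖x - ξ‖ ‖ξ‖ ▸ abs_norm_sub_sub_norm_le x ξ
    have hw : polyExpWeight b₁ η₁ ‖ξ‖ / polyExpWeight |b₁| (-η₁) 1 ≤
        polyExpWeight b₁ η₁ ‖x - ξ‖ := by
      rw [div_le_iff₀ hw₁]
      calc polyExpWeight b₁ η₁ ‖ξ‖
          ≤ polyExpWeight b₁ η₁ ‖x - ξ‖ * polyExpWeight |b₁| (-η₁) ‖x‖ :=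
            polyExpWeight.le_mul hη₁ (norm_nonneg _) (norm_nonneg _) hdist
        _ ≤ polyExpWeight b₁ η₁ ‖x - ξ‖ * polyExpWeight |b₁| (-η₁) 1 := by
            refine mul_le_mul_of_nonneg_left ?_ (polyExpWeight.pos _ _ (norm_nonneg _)).le
            exact polyExpWeight.monotoneOn (abs_nonneg b₁) (neg_nonpos.mpr hη₁)
              (norm_nonneg x) (mem_Ici.mpr zero_le_one) hx
    have hr₀ : r₀ ≤ ‖x - ξ‖ := by linarith [(abs_le.mp hdist).2]
    rw [mul_div_assoc]
    exact mul_le_mul ((mul_le_mul_of_nonneg_left hw ha).trans (hΓ₁ _ hr₀))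
      (hΓ₂ _ ⟨norm_nonneg x, hx⟩) hm (hΓ₁0 _ (norm_nonneg _))
  calc a * m * μ.real (Metric.closedBall 0 1) / polyExpWeight |b₁| (-η₁) 1 *
        polyExpWeight b₁ η₁ ‖ξ‖
      = a * polyExpWeight b₁ η₁ ‖ξ‖ / polyExpWeight |b₁| (-η₁) 1 * m *
          μ.real (Metric.closedBall 0 1) := by ring
    _ ≤ ∫ x in Metric.closedBall 0 1, Γ₁ ‖x - ξ‖ * Γ₂ ‖x‖ ∂μ :=
        setIntegral_ge_of_const_le_real Metric.isClosed_closedBall.measurableSet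
          measure_closedBall_lt_top.ne hball hint.integrableOn
    _ ≤ ∫ x, Γ₁ ‖x - ξ‖ * Γ₂ ‖x‖ ∂μ :=
        setIntegral_le_integral hint <| ae_of_all _ fun x =>
          mul_nonneg (hΓ₁0 _ (norm_nonneg _)) (hΓ₂0 _ (norm_nonneg _))

variable (hΓ₁ : ∀ r, 0 ≤ r → Γ₁ r ≤ A₁ * polyExpWeight b₁ η₁ r)
  (hΓ₂ : ∀ r, 0 ≤ r → Γ₂ r ≤ A₂ * polyExpWeight b₂ η₂ r)
  (hΓ₁0 : ∀ r, 0 ≤ r → 0 ≤ Γ₁ r) (hΓ₂0 : ∀ r, 0 ≤ r → 0 ≤ Γ₂ r)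
  (hA₁ : 0 ≤ A₁) (hη₁ : 0 ≤ η₁) (hη : η₁ < η₂)
include hΓ₁ hΓ₂ hΓ₁0 hΓ₂0 hA₁ hη₁ hη

lemma integrable_mul_norm_sub (hc₁ : Continuous Γ₁) (hc₂ : Continuous Γ₂) (ξ : E) :
    Integrable (fun x => Γ₁ ‖x - ξ‖ * Γ₂ ‖x‖) μ := by
  refine ((integrable_polyExpWeight_norm (|b₁| + b₂) (sub_pos.mpr hη)).const_mul
    (A₁ * A₂ * polyExpWeight b₁ η₁ ‖ξ‖)).mono' (by fun_prop) (ae_of_all _ fun x => ?_)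
  rw [Real.norm_of_nonneg (mul_nonneg (hΓ₁0 _ (norm_nonneg _)) (hΓ₂0 _ (norm_nonneg _)))]
  exact mul_norm_sub_le_polyExpWeight hΓ₁ hΓ₂ hΓ₂0 hA₁ hη₁ x ξ

lemma integral_mul_norm_sub_le (ξ : E) :
    ∫ x, Γ₁ ‖x - ξ‖ * Γ₂ ‖x‖ ∂μ ≤
      A₁ * A₂ * (∫ x, polyExpWeight (|b₁| + b₂) (η₂ - η₁) ‖x‖ ∂μ) * polyExpWeight b₁ η₁ ‖ξ‖ := by
  calc ∫ x, Γ₁ ‖x - ξ‖ * Γ₂ ‖x‖ ∂μ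
      ≤ ∫ x, A₁ * A₂ * polyExpWeight b₁ η₁ ‖ξ‖ * polyExpWeight (|b₁| + b₂) (η₂ - η₁) ‖x‖ ∂μ :=
        integral_mono_of_nonneg
          (ae_of_all _ fun x => mul_nonneg (hΓ₁0 _ (norm_nonneg _)) (hΓ₂0 _ (norm_nonneg _)))
          ((integrable_polyExpWeight_norm _ (sub_pos.mpr hη)).const_mul _)
          (ae_of_all _ (mul_norm_sub_le_polyExpWeight hΓ₁ hΓ₂ hΓ₂0 hA₁ hη₁ · ξ))
    _ = A₁ * A₂ * (∫ x, polyExpWeight (|b₁| + b₂) (η₂ - η₁) ‖x‖ ∂μ) * polyExpWeight b₁ η₁ ‖ξ‖ := by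
        rw [integral_const_mul]; ring

end Convolution

theorem stmt_4 (N : ℕ) (Γ₁ Γ₂ : ℝ → ℝ) (b₁ b₂ η₁ η₂ : ℝ)
    (hη₁ : 0 < η₁) (hη : η₁ < η₂)
    (hcont₁ : Continuous Γ₁) (hcont₂ : Continuous Γ₂)
    (hpos₁ : ∀ r : ℝ, 0 ≤ r → 0 < Γ₁ r) (hpos₂ : ∀ r : ℝ, 0 ≤ r → 0 < Γ₂ r)
    (hasymp₁ : ∃ c c' r₀ : ℝ, 0 < c ∧ 0 < c' ∧ ∀ r : ℝ, r₀ ≤ r →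
      c * r ^ b₁ * Real.exp (-η₁ * r) ≤ Γ₁ r ∧ Γ₁ r ≤ c' * r ^ b₁ * Real.exp (-η₁ * r))
    (hasymp₂ : ∃ c c' r₀ : ℝ, 0 < c ∧ 0 < c' ∧ ∀ r : ℝ, r₀ ≤ r →
      c * r ^ b₂ * Real.exp (-η₂ * r) ≤ Γ₂ r ∧ Γ₂ r ≤ c' * r ^ b₂ * Real.exp (-η₂ * r)) :
    ∃ C R₀ : ℝ, 1 ≤ C ∧ ∀ ξ : EuclideanSpace ℝ (Fin N), R₀ ≤ ‖ξ‖ →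
      (1 / C) * (‖ξ‖ ^ b₁ * Real.exp (-η₁ * ‖ξ‖))
          ≤ (∫ x : EuclideanSpace ℝ (Fin N), Γ₁ ‖x - ξ‖ * Γ₂ ‖x‖) ∧
      (∫ x : EuclideanSpace ℝ (Fin N), Γ₁ ‖x - ξ‖ * Γ₂ ‖x‖)
          ≤ C * (‖ξ‖ ^ b₁ * Real.exp (-η₁ * ‖ξ‖)) := by
  obtain ⟨c₁, c₁', r₁, hc₁, hc₁', h₁⟩ := hasymp₁
  obtain ⟨_, c₂', r₂, _, hc₂', h₂⟩ := hasymp₂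
  obtain ⟨A₁, hA₁, hup₁⟩ := exists_le_polyExpWeight hcont₁ hc₁'.le fun r hr => (h₁ r hr).2
  obtain ⟨A₂, -, hup₂⟩ := exists_le_polyExpWeight hcont₂ hc₂'.le fun r hr => (h₂ r hr).2
  obtain ⟨a₁, R₁, ha₁, hlow₁⟩ := exists_polyExpWeight_le hc₁ fun r hr => (h₁ r hr).1
  obtain ⟨r_min, hr_min, hmin⟩ :=
    isCompact_Icc.exists_isMinOn (nonempty_Icc.mpr zero_le_one) hcont₂.continuousOn
  have hΓ₁0 : ∀ r, 0 ≤ r → 0 ≤ Γ₁ r := fun r hr => (hpos₁ r hr).le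
  have hΓ₂0 : ∀ r, 0 ≤ r → 0 ≤ Γ₂ r := fun r hr => (hpos₂ r hr).le
  have hball : 0 < volume.real (Metric.closedBall (0 : EuclideanSpace ℝ (Fin N)) 1) :=
    ENNReal.toReal_pos (Metric.measure_closedBall_pos _ _ one_pos).ne'
      measure_closedBall_lt_top.ne
  have hκ := polyExpWeight.pos |b₁| (-η₁) zero_le_one
  have hm := hpos₂ r_min hr_min.1
  obtain ⟨C, hC, hbounds⟩ := exists_one_le_bounds_rpow_mul_exp (ρ := norm)
    (F := fun ξ : EuclideanSpace ℝ (Fin N) => ∫ x, Γ₁ ‖x - ξ‖ * Γ₂ ‖x‖)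
    (by positivity) (le_max_right (R₁ + 1) 1) fun ξ hξ =>
      ⟨polyExpWeight_mul_le_integral hlow₁ (fun r hr => hmin hr) hΓ₁0 hΓ₂0 ha₁.le hm.le hη₁.le
          ((le_max_left _ _).trans hξ)
          (integrable_mul_norm_sub hup₁ hup₂ hΓ₁0 hΓ₂0 hA₁ hη₁.le hη hcont₁ hcont₂ ξ),
        integral_mul_norm_sub_le hup₁ hup₂ hΓ₁0 hΓ₂0 hA₁ hη₁.le hη ξ⟩
  exact ⟨C, max (R₁ + 1) 1, hC, hbounds⟩
end

section
/- Let d solve the balancing equation d^{m+1} Ψ(d) = a₀ m (2 sin(π/K))^m, where Ψ(s) = c s^{−(N−1)/2} e^{−s}(1 + O(s^{−1})) with c > 0 and a₀, m > 0, and assume d → ∞ as K → ∞. Then d = m ln K + (m − (N−3)/2) ln(m ln K) + O(1) as K → ∞. -/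
open Filter Real

theorem stmt_8 (N : ℕ) (Ψ : ℝ → ℝ) (c a₀ m : ℝ)
    (hc : 0 < c) (ha : 0 < a₀) (hm : 0 < m)
    (hΨ : ∃ C s₀ : ℝ, 0 < s₀ ∧ ∀ s : ℝ, s₀ ≤ s →
      |Ψ s - c * s ^ (-((N : ℝ) - 1) / 2) * Real.exp (-s)|
        ≤ (C / s) * (c * s ^ (-((N : ℝ) - 1) / 2) * Real.exp (-s)))
    (d : ℕ → ℝ)
    (hbal : ∀ᶠ K : ℕ in atTop,
      d K ^ (m + 1) * Ψ (d K) = a₀ * m * (2 * Real.sin (π / K)) ^ m)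
    (hd : Tendsto d atTop atTop) :
    ∃ C : ℝ, ∀ᶠ K : ℕ in atTop,
      |d K - (m * Real.log K + (m - ((N : ℝ) - 3) / 2) * Real.log (m * Real.log K))| ≤ C := by
  obtain ⟨C0, s₀, hs₀, hΨb⟩ := hΨ
  set β : ℝ := m - ((N : ℝ) - 3) / 2 with hβ
  set C₁ : ℝ := |Real.log c| + 1 + |Real.log (a₀ * m)| + m * Real.log 2 + 2 * m with hC₁
  have hC₁pos : 1 ≤ C₁ := by
    have h2 : (0:ℝ) ≤ Real.log 2 := Real.log_nonneg one_le_two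
    have := abs_nonneg (Real.log c)
    have := abs_nonneg (Real.log (a₀ * m))
    nlinarith
  have hexp2 : (4:ℝ) ≤ Real.exp 2 := by
    rw [show (2:ℝ) = 1 + 1 by norm_num, Real.exp_add]
    nlinarith [Real.exp_one_gt_d9]
  -- Step A : eventually |d K - β log (d K) - m log K| ≤ C₁
  have hA : ∀ᶠ K : ℕ in atTop, |d K - β * Real.log (d K) - m * Real.log K| ≤ C₁ := by
    have hdK_ge : ∀ᶠ K : ℕ in atTop, max s₀ (max 1 (2 * (|C0| + 1))) ≤ d K :=
      hd.eventually (eventually_ge_atTop _)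
    filter_upwards [hbal, hdK_ge, eventually_ge_atTop 4] with K heq hdge hK4
    set x : ℝ := d K with hx
    have hs : s₀ ≤ x := le_trans (le_max_left _ _) hdge
    have h1x : (1:ℝ) ≤ x := le_trans (le_trans (le_max_left _ _) (le_max_right _ _)) hdge
    have hCx : 2 * (|C0| + 1) ≤ x := le_trans (le_trans (le_max_right _ _) (le_max_right _ _)) hdge
    have hxpos : 0 < x := lt_of_lt_of_le one_pos h1x
    have hK4' : (4:ℝ) ≤ (K:ℝ) := by exact_mod_cast hK4
    have hKpos : (0:ℝ) < (K:ℝ) := by linarith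
    set P : ℝ := c * x ^ (-((N : ℝ) - 1) / 2) * Real.exp (-x) with hP
    have hPpos : 0 < P := by
      have := Real.rpow_pos_of_pos hxpos (-((N : ℝ) - 1) / 2)
      positivity
    -- |Ψ x - P| ≤ P / 2
    have hΨP : |Ψ x - P| ≤ P / 2 := by
      refine (hΨb x hs).trans ?_
      have h1 : (C0 / x) * P ≤ (|C0| / x) * P := by
        gcongr
        exact le_abs_self C0
      have h2 : |C0| / x ≤ 1 / 2 := by
        rw [div_le_div_iff₀ hxpos (by norm_num)]
        nlinarith [abs_nonneg C0]
      calc (C0 / x) * P ≤ (|C0| / x) * P := h1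
        _ ≤ (1/2) * P := mul_le_mul_of_nonneg_right h2 hPpos.le
        _ = P / 2 := by ring
    have hΨlow : P / 2 ≤ Ψ x := by
      have := abs_le.mp hΨP
      linarith [this.1]
    have hΨhigh : Ψ x ≤ 3 / 2 * P := by
      have := abs_le.mp hΨP
      linarith [this.2]
    have hΨpos : 0 < Ψ x := lt_of_lt_of_le (by linarith) hΨlow
    -- r := log Ψ x - log P, |r| ≤ 1
    set r : ℝ := Real.log (Ψ x) - Real.log P with hr
    have hrabs : |r| ≤ 1 := by
      have ht : r = Real.log (Ψ x / P) := (Real.log_div hΨpos.ne' hPpos.ne').symm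
      set t : ℝ := Ψ x / P with htdef
      have htpos : 0 < t := div_pos hΨpos hPpos
      have ht1 : 1 / 2 ≤ t := by rw [htdef, le_div_iff₀ hPpos]; linarith
      have ht2 : t ≤ 3 / 2 := by rw [htdef, div_le_iff₀ hPpos]; linarith
      rw [ht, abs_le]
      constructor
      · have h3 : Real.log t⁻¹ ≤ t⁻¹ - 1 := Real.log_le_sub_one_of_pos (inv_pos.mpr htpos)
        have h4 : t⁻¹ ≤ 2 := by
          rw [inv_le_comm₀ htpos (by norm_num)] at *
          linarith
        rw [Real.log_inv] at h3
        linarith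
      · have h3 : Real.log t ≤ t - 1 := Real.log_le_sub_one_of_pos htpos
        linarith
    -- sin bounds
    have hπK_pos : 0 < π / (K:ℝ) := div_pos Real.pi_pos hKpos
    have hπK_lt : π / (K:ℝ) ≤ π / 2 := by
      apply div_le_div_of_nonneg_left Real.pi_pos.le (by norm_num)
      linarith
    have hsinpos : 0 < Real.sin (π / (K:ℝ)) := by
      apply Real.sin_pos_of_pos_of_lt_pi hπK_pos
      calc π / (K:ℝ) ≤ π / 2 := hπK_lt
        _ < π := by linarith [Real.pi_pos]
    have hsinlow : 2 / (K:ℝ) ≤ Real.sin (π / (K:ℝ)) := by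
      have := Real.mul_le_sin hπK_pos.le hπK_lt
      have hπ : (0:ℝ) < π := Real.pi_pos
      calc 2 / (K:ℝ) = 2 / π * (π / (K:ℝ)) := by field_simp
        _ ≤ Real.sin (π / (K:ℝ)) := this
    have hsinhigh : Real.sin (π / (K:ℝ)) ≤ π / (K:ℝ) := (Real.sin_lt hπK_pos).le
    have hS : |Real.log (Real.sin (π / (K:ℝ))) + Real.log K| ≤ 2 := by
      have hlogπ : Real.log π ≤ 2 := by
        calc Real.log π ≤ Real.log (Real.exp 2) :=
              Real.log_le_log Real.pi_pos (le_trans Real.pi_le_four hexp2)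
          _ = 2 := Real.log_exp 2
      have hup : Real.log (Real.sin (π / (K:ℝ))) ≤ Real.log π - Real.log K := by
        calc Real.log (Real.sin (π / (K:ℝ))) ≤ Real.log (π / (K:ℝ)) :=
              Real.log_le_log hsinpos hsinhigh
          _ = Real.log π - Real.log K := Real.log_div Real.pi_pos.ne' hKpos.ne'
      have hlo : Real.log 2 - Real.log K ≤ Real.log (Real.sin (π / (K:ℝ))) := by
        calc Real.log 2 - Real.log K = Real.log (2 / (K:ℝ)) :=
              (Real.log_div two_ne_zero hKpos.ne').symm
          _ ≤ Real.log (Real.sin (π / (K:ℝ))) :=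
              Real.log_le_log (by positivity) hsinlow
      have hlog2 : (0:ℝ) ≤ Real.log 2 := Real.log_nonneg one_le_two
      rw [abs_le]
      constructor <;> linarith
    -- take log of the balancing equation
    have hαβ : β = m + 1 + (-((N : ℝ) - 1) / 2) := by rw [hβ]; ring
    have hlogeq : (m + 1) * Real.log x + Real.log (Ψ x)
        = Real.log (a₀ * m) + m * (Real.log 2 + Real.log (Real.sin (π / (K:ℝ)))) := by
      have h := congrArg Real.log heq
      rw [Real.log_mul (Real.rpow_pos_of_pos hxpos _).ne' hΨpos.ne',
        Real.log_rpow hxpos,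
        Real.log_mul (by positivity) (Real.rpow_pos_of_pos (by linarith) m).ne',
        Real.log_rpow (by linarith),
        Real.log_mul two_ne_zero hsinpos.ne'] at h
      exact h
    have hlogP : Real.log P = Real.log c + (-((N : ℝ) - 1) / 2) * Real.log x - x := by
      rw [hP, Real.log_mul (by positivity) (Real.exp_pos _).ne',
        Real.log_mul hc.ne' (Real.rpow_pos_of_pos hxpos _).ne',
        Real.log_rpow hxpos, Real.log_exp]
      ring
    have key : x - β * Real.log x - m * Real.log K
        = (Real.log c - Real.log (a₀ * m) - m * Real.log 2) + r
          - m * (Real.log (Real.sin (π / (K:ℝ))) + Real.log K) := by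
      rw [hαβ, hr, hlogP]
      linear_combination -hlogeq
    rw [key, hC₁]
    have h1 := le_abs_self (Real.log c)
    have h2 := neg_abs_le (Real.log c)
    have h3 := le_abs_self (Real.log (a₀ * m))
    have h4 := neg_abs_le (Real.log (a₀ * m))
    have h5 := abs_le.mp hrabs
    have h6 := abs_le.mp hS
    have h7 : m * (Real.log (Real.sin (π / (K:ℝ))) + Real.log K) ≤ m * 2 :=
      mul_le_mul_of_nonneg_left h6.2 hm.le
    have h8 : m * (-2) ≤ m * (Real.log (Real.sin (π / (K:ℝ))) + Real.log K) :=
      mul_le_mul_of_nonneg_left h6.1 hm.le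
    have hmlog2 : 0 ≤ m * Real.log 2 := mul_nonneg hm.le (Real.log_nonneg one_le_two)
    rw [abs_le]
    constructor <;> linarith [h5.1, h5.2]
  -- Step B : log is small compared to d K
  have hlog : ∀ᶠ K : ℕ in atTop, |β| * |Real.log (d K)| ≤ d K / 2 := by
    have h := Real.isLittleO_log_id_atTop.def (c := 1 / (2 * (|β| + 1)))
      (by positivity)
    filter_upwards [hd.eventually h, hd.eventually (eventually_ge_atTop 0)] with K h1 h0
    simp only [Real.norm_eq_abs, id_eq] at h1
    rw [abs_of_nonneg h0] at h1
    have hb := abs_nonneg β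
    have := abs_nonneg (Real.log (d K))
    have key : |β| / (2 * (|β| + 1)) ≤ 1 / 2 := by
      rw [div_le_div_iff₀ (by positivity) (by norm_num)]; nlinarith
    calc |β| * |Real.log (d K)| ≤ |β| * (1 / (2 * (|β| + 1)) * d K) :=
          mul_le_mul_of_nonneg_left h1 hb
      _ = (|β| / (2 * (|β| + 1))) * d K := by ring
      _ ≤ (1 / 2) * d K := mul_le_mul_of_nonneg_right key h0
      _ = d K / 2 := by ring
  have hLlarge : ∀ᶠ K : ℕ in atTop, 4 * C₁ + 4 ≤ m * Real.log K := by
    have hT : Tendsto (fun K : ℕ => m * Real.log K) atTop atTop := by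
      apply Tendsto.const_mul_atTop hm
      exact Real.tendsto_log_atTop.comp tendsto_natCast_atTop_atTop
    exact hT.eventually_ge_atTop _
  refine ⟨C₁ + 2 * |β|, ?_⟩
  filter_upwards [hA, hlog, hLlarge] with K hA' hlog' hL'
  set x : ℝ := d K with hx
  set L : ℝ := m * Real.log K with hL
  have hLpos : 0 < L := by linarith
  have hAle := abs_le.mp hA'
  have hbabs : -( |β| * |Real.log x|) ≤ β * Real.log x ∧ β * Real.log x ≤ |β| * |Real.log x| := by
    constructor
    · rw [← abs_mul]; exact neg_abs_le _
    · rw [← abs_mul]; exact le_abs_self _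
  -- bounds on x in terms of L
  have hxup : x ≤ 3 * L := by linarith [hbabs.2, hAle.2]
  have hxlow : L / 4 ≤ x := by linarith [hbabs.1, hAle.1]
  have hxpos : 0 < x := lt_of_lt_of_le (by positivity) hxlow
  -- |log x - log L| ≤ 2
  have hlogdiff : |Real.log x - Real.log L| ≤ 2 := by
    have hlog3 : Real.log 3 ≤ 2 := by
      calc Real.log 3 ≤ Real.log (Real.exp 2) :=
            Real.log_le_log (by norm_num) (by linarith)
        _ = 2 := Real.log_exp 2
    have hlog4 : Real.log 4 ≤ 2 := by
      calc Real.log 4 ≤ Real.log (Real.exp 2) := Real.log_le_log (by norm_num) hexp2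
        _ = 2 := Real.log_exp 2
    have hup : Real.log x ≤ Real.log 3 + Real.log L := by
      calc Real.log x ≤ Real.log (3 * L) := Real.log_le_log hxpos hxup
        _ = Real.log 3 + Real.log L := Real.log_mul (by norm_num) hLpos.ne'
    have hlo : Real.log L - Real.log 4 ≤ Real.log x := by
      calc Real.log L - Real.log 4 = Real.log (L / 4) :=
            (Real.log_div hLpos.ne' (by norm_num)).symm
        _ ≤ Real.log x := Real.log_le_log (by positivity) hxlow
    rw [abs_le]
    constructor <;> linarith
  -- conclude
  have key : x - (L + β * Real.log L) = (x - β * Real.log x - L) + β * (Real.log x - Real.log L) := by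
    ring
  rw [key]
  calc |(x - β * Real.log x - L) + β * (Real.log x - Real.log L)|
      ≤ |x - β * Real.log x - L| + |β * (Real.log x - Real.log L)| := abs_add_le _ _
    _ ≤ C₁ + 2 * |β| := by
        rw [abs_mul]
        have := mul_le_mul_of_nonneg_left hlogdiff (abs_nonneg β)
        linarith
end

section
/- With d as in the balancing equation and R defined by d = 2R sin(π/K), one has R = (m/(2π)) K ln K + (1/(2π))(m − (N−3)/2) K ln(m ln K) + O(K) as K → ∞. -/
/-!
Taking logarithms in the balancing equation and using `Ψ(s) ~ c s^{-(N-1)/2} e^{-s}` and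
`K sin(π/K) → π` gives `d - μ log d = m log K + O(1)` with `μ = m - (N-3)/2`. Since
`μ log d = o(d)`, this forces `d ~ m log K`, hence `μ log d = μ log (m log K) + O(1)` and
`d = D + O(1)` with `D = m log K + μ log (m log K) = O(K)`. Finally, writing
`w = (2 sin(π/K))⁻¹ = K/(2π) + O(1)`, one has `R - K D/(2π) = w (d - D) + D (w - K/(2π)) = O(K)`.
-/

open Filter Real Asymptotics Topology

namespace Real

lemma abs_inv_sin_sub_inv_le {x : ℝ} (hx : 0 < x) (hx1 : x ≤ 1) : |(sin x)⁻¹ - x⁻¹| ≤ x := by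
  have hsin_le : sin x ≤ x := sin_le hx.le
  have hsin_gt : x - x ^ 3 / 6 < sin x := sin_gt_sub_cube hx
  have hcube : x ^ 3 ≤ x := by simpa using pow_le_pow_of_le_one hx.le hx1 (by norm_num : 1 ≤ 3)
  have hsin_lower : 5 * x / 6 < sin x := by linarith
  have hsin_pos : 0 < sin x := by linarith
  rw [abs_of_nonneg (sub_nonneg.2 (inv_anti₀ hsin_pos hsin_le)), inv_sub_inv hsin_pos.ne' hx.ne',
    div_le_iff₀ (by positivity)]
  nlinarith [mul_pos hx hx]

lemma tendsto_natCast_mul_sin_pi_div :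
    Tendsto (fun K : ℕ => (K : ℝ) * sin (π / K)) atTop (𝓝 π) := by
  have hx : Tendsto (fun K : ℕ => π / K) atTop (𝓝 0) :=
    tendsto_const_nhds.div_atTop tendsto_natCast_atTop_atTop
  have hsinc := (continuous_sinc.tendsto 0).comp hx
  rw [Function.comp_def, sinc_zero] at hsinc
  have hlim := hsinc.const_mul π
  rw [mul_one] at hlim
  refine hlim.congr' ?_
  filter_upwards [eventually_gt_atTop 0] with K hK
  rw [sinc_of_ne_zero (by positivity)]
  field_simp

end Real

theorem tendsto_div_of_abs_sub_le_div_mul {Ψ F : ℝ → ℝ} {C : ℝ}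
    (hF : ∀ᶠ s in atTop, 0 < F s) (h : ∀ᶠ s in atTop, |Ψ s - F s| ≤ C / s * F s) :
    Tendsto (fun s => Ψ s / F s) atTop (𝓝 1) := by
  rw [← tendsto_sub_nhds_zero_iff]
  refine squeeze_zero_norm' (a := fun s => C / s) ?_ (tendsto_const_nhds.div_atTop tendsto_id)
  filter_upwards [hF, h] with s hFs hs
  rw [norm_eq_abs, div_sub_one hFs.ne', abs_div, abs_of_pos hFs, div_le_iff₀ hFs]
  exact hs

theorem sub_mul_log_eq_of_balance {c a₀ m p t u k Q : ℝ} (hc : 0 < c) (ha : 0 < a₀) (hm : 0 < m)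
    (ht : 0 < t) (hu : 0 < u) (hk : 0 < k) (hQ : 0 < Q)
    (h : t ^ (m + 1) * (c * t ^ p * exp (-t) * Q) = a₀ * m * (2 * u) ^ m) :
    t - (m + 1 + p) * log t - m * log k
      = log c + log Q - log a₀ - log m - m * log (2 * k * u) := by
  have hlog := congrArg log h
  rw [log_mul (by positivity) (by positivity), log_mul (by positivity) hQ.ne',
    log_mul (by positivity) (by positivity), log_mul hc.ne' (by positivity), log_exp,
    log_rpow ht, log_rpow ht, log_mul (by positivity) (by positivity), log_mul ha.ne' hm.ne',
    log_rpow (by positivity)] at hlog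
  rw [show 2 * k * u = k * (2 * u) by ring, log_mul hk.ne' (by positivity)]
  linear_combination -hlog

theorem tendsto_sub_mul_log_of_balance {Ψ : ℝ → ℝ} {c a₀ m p : ℝ} (hc : 0 < c) (ha : 0 < a₀)
    (hm : 0 < m) {d : ℕ → ℝ}
    (hΨ : Tendsto (fun s => Ψ s / (c * s ^ p * exp (-s))) atTop (𝓝 1))
    (hbal : ∀ᶠ K : ℕ in atTop, d K ^ (m + 1) * Ψ (d K) = a₀ * m * (2 * sin (π / K)) ^ m)
    (hd : Tendsto d atTop atTop) :
    Tendsto (fun K : ℕ => d K - (m + 1 + p) * log (d K) - m * log K) atTop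
      (𝓝 (log c - log a₀ - log m - m * log (2 * π))) := by
  set Q : ℕ → ℝ := fun K => Ψ (d K) / (c * d K ^ p * exp (-d K))
  have hQ : Tendsto Q atTop (𝓝 1) := hΨ.comp hd
  have hlim : Tendsto (fun K : ℕ => log c + log (Q K) - log a₀ - log m
      - m * log (2 * K * sin (π / K))) atTop (𝓝 (log c - log a₀ - log m - m * log (2 * π))) := by
    have hsin := (tendsto_natCast_mul_sin_pi_div.const_mul 2).log (by positivity)
    simpa [mul_assoc] using
      ((((tendsto_const_nhds.add (hQ.log one_ne_zero)).sub tendsto_const_nhds).sub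
        tendsto_const_nhds).sub (hsin.const_mul m))
  refine hlim.congr' ?_
  filter_upwards [hbal, hd.eventually_gt_atTop 0, hQ.eventually (lt_mem_nhds one_pos),
    eventually_ge_atTop 4] with K hK hdK hQK hK4
  have hK4' : (4 : ℝ) ≤ K := by exact_mod_cast hK4
  have hsin : 0 < sin (π / K) :=
    sin_pos_of_pos_of_lt_pi (by positivity) (div_lt_self pi_pos (by linarith))
  refine (sub_mul_log_eq_of_balance hc ha hm hdK hsin (by positivity) hQK ?_).symm
  rwa [mul_div_cancel₀ _ (by positivity)]

theorem isBigO_sub_add_mul_log_of_isBigO_sub_mul_log {α : Type*} {l : Filter α} {t L : α → ℝ}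
    {μ : ℝ} (ht : Tendsto t l atTop)
    (h : (fun x => t x - μ * log (t x) - L x) =O[l] (fun _ => (1 : ℝ))) :
    (fun x => t x - (L x + μ * log (L x))) =O[l] (fun _ => (1 : ℝ)) := by
  have hlog : (fun x => μ * log (t x)) =o[l] t :=
    (isLittleO_log_id_atTop.comp_tendsto ht).const_mul_left μ
  have hone : (fun _ => (1 : ℝ)) =o[l] t :=
    (isLittleO_one_left_iff ℝ).2 (tendsto_norm_atTop_atTop.comp ht)
  -- `μ log t = o(t)` forces `L ~ t`, so `log L - log t = log (L / t)` tends to `0`.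
  have hLt : L ~[l] t := by
    refine ((h.trans_isLittleO hone).neg_left.sub hlog).congr_left fun x => ?_
    simp only [Pi.sub_apply]
    ring
  have hratio : Tendsto (fun x => L x / t x) l (𝓝 1) :=
    (isEquivalent_iff_tendsto_one (ht.eventually_ne_atTop 0)).1 hLt
  have hlog_ratio : (fun x => log (L x) - log (t x)) =O[l] (fun _ => (1 : ℝ)) := by
    refine ((hratio.log one_ne_zero).isBigO_one ℝ).congr' ?_ EventuallyEq.rfl
    filter_upwards [hLt.symm.tendsto_atTop ht |>.eventually_ne_atTop 0, ht.eventually_ne_atTop 0]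
      with x hLx htx
    exact log_div hLx htx
  refine (h.sub (hlog_ratio.const_mul_left μ)).congr_left fun x => ?_
  ring

theorem isBigO_add_mul_log_self {α : Type*} {l : Filter α} {L : α → ℝ} (μ : ℝ)
    (hL : Tendsto L l atTop) : (fun x => L x + μ * log (L x)) =O[l] L :=
  (isBigO_refl L l).add ((isLittleO_log_id_atTop.comp_tendsto hL).isBigO.const_mul_left μ)

theorem isBigO_sub_mul_of_eq_two_mul_sin {d R D : ℕ → ℝ}
    (hR : ∀ᶠ K : ℕ in atTop, d K = 2 * R K * sin (π / K))
    (hdD : (fun K => d K - D K) =O[atTop] (fun _ => (1 : ℝ)))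
    (hD : D =O[atTop] (fun K => (K : ℝ))) :
    (fun K => R K - K / (2 * π) * D K) =O[atTop] (fun K => (K : ℝ)) := by
  set w : ℕ → ℝ := fun K => (2 * sin (π / K))⁻¹
  have hw : (fun K => w K - K / (2 * π)) =O[atTop] (fun _ => (1 : ℝ)) := by
    refine IsBigO.of_bound' ?_
    filter_upwards [eventually_ge_atTop 4] with K hK
    have hK' : (4 : ℝ) ≤ K := by exact_mod_cast hK
    have hx1 : π / K ≤ 1 := (div_le_one (by positivity)).2 (by linarith [pi_le_four])
    have hbound := abs_inv_sin_sub_inv_le (by positivity) hx1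
    rw [inv_div] at hbound
    have hsplit : w K - K / (2 * π) = ((sin (π / K))⁻¹ - K / π) / 2 := by
      simp only [w, mul_inv]
      ring
    rw [hsplit, norm_eq_abs, abs_div, abs_two, norm_one]
    linarith
  have hone : (fun _ : ℕ => (1 : ℝ)) =O[atTop] (fun K => (K : ℝ)) :=
    ((isLittleO_one_left_iff ℝ).2
      (tendsto_norm_atTop_atTop.comp tendsto_natCast_atTop_atTop)).isBigO
  have hwK : w =O[atTop] (fun K => (K : ℝ)) := by
    refine ((hw.trans hone).add ((isBigO_refl _ _).const_mul_left (2 * π)⁻¹)).congr_left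
      fun K => ?_
    ring
  refine ((hwK.mul hdD).add (hD.mul hw)).congr' ?_ ?_
  · filter_upwards [hR, eventually_ge_atTop 4] with K hK hK4
    have hK4' : (4 : ℝ) ≤ K := by exact_mod_cast hK4
    have hsin : 0 < sin (π / K) :=
      sin_pos_of_pos_of_lt_pi (by positivity) (div_lt_self pi_pos (by linarith))
    simp only [w, hK]
    field_simp
    ring
  · exact Eventually.of_forall fun K => mul_one _

theorem stmt_9 (N : ℕ) (Ψ : ℝ → ℝ) (c a₀ m : ℝ)
    (hc : 0 < c) (ha : 0 < a₀) (hm : 0 < m)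
    (hΨ : ∃ C s₀ : ℝ, 0 < s₀ ∧ ∀ s : ℝ, s₀ ≤ s →
      |Ψ s - c * s ^ (-((N : ℝ) - 1) / 2) * Real.exp (-s)|
        ≤ (C / s) * (c * s ^ (-((N : ℝ) - 1) / 2) * Real.exp (-s)))
    (d R : ℕ → ℝ)
    (hbal : ∀ᶠ K : ℕ in atTop,
      d K ^ (m + 1) * Ψ (d K) = a₀ * m * (2 * Real.sin (π / K)) ^ m)
    (hR : ∀ᶠ K : ℕ in atTop, d K = 2 * R K * Real.sin (π / K))
    (hd : Tendsto d atTop atTop) :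
    ∃ C : ℝ, ∀ᶠ K : ℕ in atTop,
      |R K - ((m / (2 * π)) * K * Real.log K
          + (1 / (2 * π)) * (m - ((N : ℝ) - 3) / 2) * K * Real.log (m * Real.log K))|
        ≤ C * K := by
  obtain ⟨C, s₀, -, hC⟩ := hΨ
  have hΨF := tendsto_div_of_abs_sub_le_div_mul
    (F := fun s => c * s ^ (-((N : ℝ) - 1) / 2) * exp (-s))
    ((eventually_gt_atTop 0).mono fun s hs => by positivity) ((eventually_ge_atTop s₀).mono hC)
  have hlog := tendsto_sub_mul_log_of_balance hc ha hm hΨF hbal hd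
  rw [show m + 1 + -((N : ℝ) - 1) / 2 = m - ((N : ℝ) - 3) / 2 by ring] at hlog
  have hL : Tendsto (fun K : ℕ => m * log K) atTop atTop :=
    (tendsto_log_atTop.comp tendsto_natCast_atTop_atTop).const_mul_atTop hm
  have hD := (isBigO_add_mul_log_self (m - ((N : ℝ) - 3) / 2) hL).trans
    ((isLittleO_log_id_atTop.comp_tendsto tendsto_natCast_atTop_atTop).isBigO.const_mul_left m)
  have hdD := isBigO_sub_add_mul_log_of_isBigO_sub_mul_log hd (hlog.isBigO_one ℝ)
  obtain ⟨C', hC'⟩ := (isBigO_sub_mul_of_eq_two_mul_sin hR hdD hD).bound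
  refine ⟨C', hC'.mono fun K hK => ?_⟩
  rw [norm_eq_abs, norm_natCast] at hK
  convert hK using 3
  ring
end

section
/- Let m > 1 and d̂ > m + 1 be real parameters, and let c₁ = K²/(4π²), c₂ = (d̂−1)K/(4π), c₃ = −d̂K²/(4π²), c₄ = d̂ − m − 1. Consider the 2K×2K symmetric block matrix T = [[c₁A₁ + c₄I, c₂A₂],[−c₂A₂, c₃A₁]] with A₁, A₂ the circulant matrices above. Then for K large enough (depending on d̂ growing like m ln K), T has exactly one zero eigenvalue, exactly K−1 negative eigenvalues, and exactly K positive eigenvalues. -/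
open Real

open scoped Classical

/-- Real circulant matrix: entry `(j,k)` is `b (k - j)` (cyclic difference). -/
def circMatR {K : ℕ} (b : Fin K → ℝ) : Matrix (Fin K) (Fin K) ℝ :=
  fun j k => b (k - j)

/-- `A₁ = circ{(-2,1,0,…,0,1)}`, the discrete periodic Laplacian. -/
def matA₁ (K : ℕ) : Matrix (Fin K) (Fin K) ℝ :=
  circMatR (fun i : Fin K =>
    if (i : ℕ) = 0 then -2 else if (i : ℕ) = 1 then 1
      else if (i : ℕ) = K - 1 then 1 else 0)

/-- `A₂ = circ{(0,1,0,…,0,-1)}`, the centered discrete first difference. -/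
def matA₂ (K : ℕ) : Matrix (Fin K) (Fin K) ℝ :=
  circMatR (fun i : Fin K =>
    if (i : ℕ) = 1 then 1 else if (i : ℕ) = K - 1 then -1 else 0)

/-- The `2K × 2K` block matrix `T = [[c₁A₁ + c₄I, c₂A₂], [-c₂A₂, c₃A₁]]` with
`c₁ = K²/(4π²)`, `c₂ = (dhat-1)K/(4π)`, `c₃ = -dhatK²/(4π²)`, `c₄ = dhat - m - 1`. -/
noncomputable def matT (K : ℕ) (m dhat : ℝ) :
    Matrix (Fin K ⊕ Fin K) (Fin K ⊕ Fin K) ℝ :=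
  Matrix.fromBlocks
    (((K : ℝ) ^ 2 / (4 * π ^ 2)) • matA₁ K + (dhat - m - 1) • (1 : Matrix (Fin K) (Fin K) ℝ))
    (((dhat - 1) * K / (4 * π)) • matA₂ K)
    ((-((dhat - 1) * K / (4 * π))) • matA₂ K)
    ((-(dhat * (K : ℝ) ^ 2 / (4 * π ^ 2))) • matA₁ K)

/-!
Conjugating `T` by `diag(F, F)`, where `F = (ζ ^ (j * k))` is the Fourier matrix of a primitive
`K`-th root of unity `ζ`, turns every block into a diagonal matrix: `A₁` and `A₂` become
`diag(w + w⁻¹ - 2)` and `diag(w - w⁻¹)` with `w = ζ ^ l`. Since `‖w‖ = 1`, the first is the real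
number `μ = 2 Re w - 2 = -4 sin² (π l / K) ≤ 0`, vanishing only for `l = 0`, and the square of the
second is `μ (μ + 4)`. Hence the characteristic polynomial of `T` is the product over `l` of the
real quadratics `Λ² - ((c₁ + c₃) μ + c₄) Λ + μ (μ (c₂² + c₁ c₃) + 4 c₂² + c₃ c₄)`.

For `K ≳ 2 m π²` and `d̂ ≤ 2 m ln K` we have `d̂ π² ≤ K²`, which gives `c₂² + c₁ c₃ ≤ 0`, while
`4 c₂² + c₃ c₄ = c₁ ((m - 1) d̂ + 1) > 0` and `c₁ + c₃ < 0 < c₄`. So the linear coefficient is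
positive and the constant term is negative for `l ≠ 0` and zero for `l = 0`: every quadratic has
one positive root, and its other root is negative except for `l = 0`, where it is `0`.
-/

open Matrix Polynomial

section BlockDiagonal

variable {R : Type*} [CommRing R] {ι : Type*} [Fintype ι] [DecidableEq ι]

theorem Matrix.det_fromBlocks_diagonal (a b c d : ι → R) :
    (fromBlocks (diagonal a) (diagonal b) (diagonal c) (diagonal d)).det
      = ∏ i, (a i * d i - b i * c i) := by
  let e : Fin 2 × ι ≃ ι ⊕ ι :=
    (finTwoEquiv.prodCongr (Equiv.refl ι)).trans (Equiv.boolProdEquivSum ι)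
  have hblock : (fromBlocks (diagonal a) (diagonal b) (diagonal c) (diagonal d)).submatrix e e
      = blockDiagonal fun i => !![a i, b i; c i, d i] := by
    ext ⟨p, i⟩ ⟨q, j⟩
    fin_cases p <;> fin_cases q <;> rcases eq_or_ne i j with rfl | h <;>
      simp [e, finTwoEquiv, blockDiagonal_apply, *]
  rw [← det_submatrix_equiv_self e, hblock, det_blockDiagonal]
  simp [det_fin_two_of]

theorem Matrix.charpoly_fromBlocks_diagonal (a b c d : ι → R) :
    (fromBlocks (diagonal a) (diagonal b) (diagonal c) (diagonal d)).charpoly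
      = ∏ i, ((X - C (a i)) * (X - C (d i)) - C (b i) * C (c i)) := by
  have hchar : charmatrix (fromBlocks (diagonal a) (diagonal b) (diagonal c) (diagonal d))
      = fromBlocks (diagonal fun i => X - C (a i)) (diagonal fun i => -C (b i))
          (diagonal fun i => -C (c i)) (diagonal fun i => X - C (d i)) := by
    ext (i | i) (j | j) <;> rcases eq_or_ne i j with rfl | h <;> simp [*]
  rw [charpoly, hchar, det_fromBlocks_diagonal]
  simp only [mul_neg, neg_mul, neg_neg]

theorem Matrix.charpoly_eq_of_mul_eq_mul {M N G : Matrix ι ι R} (hG : IsUnit G.det)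
    (h : M * G = G * N) : M.charpoly = N.charpoly := by
  have hN : N = G⁻¹ * M * G := by
    rw [mul_assoc, h, ← mul_assoc, nonsing_inv_mul _ hG, one_mul]
  rw [hN]
  exact (charpoly_units_conj' ((isUnit_iff_isUnit_det G).mpr hG).unit M).symm

theorem Matrix.charpoly_fromBlocks_of_mul_eq_mul_diagonal {F A₁₁ A₁₂ A₂₁ A₂₂ : Matrix ι ι R}
    {a₁₁ a₁₂ a₂₁ a₂₂ : ι → R} (hF : IsUnit F.det)
    (h₁₁ : A₁₁ * F = F * diagonal a₁₁) (h₁₂ : A₁₂ * F = F * diagonal a₁₂)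
    (h₂₁ : A₂₁ * F = F * diagonal a₂₁) (h₂₂ : A₂₂ * F = F * diagonal a₂₂) :
    (fromBlocks A₁₁ A₁₂ A₂₁ A₂₂).charpoly
      = ∏ i, ((X - C (a₁₁ i)) * (X - C (a₂₂ i)) - C (a₁₂ i) * C (a₂₁ i)) := by
  rw [← charpoly_fromBlocks_diagonal]
  apply charpoly_eq_of_mul_eq_mul (G := fromBlocks F 0 0 F)
  · simpa [det_fromBlocks_zero₂₁] using hF.mul hF
  · simp [fromBlocks_multiply, h₁₁, h₁₂, h₂₁, h₂₂]

theorem Matrix.smul_mul_eq_mul_diagonal_smul {F M : Matrix ι ι R} {v : ι → R}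
    (h : M * F = F * diagonal v) (c : R) : (c • M) * F = F * diagonal (c • v) := by
  rw [smul_mul, h, diagonal_smul, Matrix.mul_smul]

theorem Matrix.smul_add_smul_one_mul_eq_mul_diagonal {F M : Matrix ι ι R} {v : ι → R}
    (h : M * F = F * diagonal v) (c d : R) :
    (c • M + d • 1) * F = F * diagonal (c • v + fun _ => d) := by
  have hd : (d • 1 : Matrix ι ι R) * F = F * diagonal fun _ => d := by
    rw [← smul_one_eq_diagonal, smul_mul, Matrix.mul_smul, one_mul, mul_one]
  rw [add_mul, smul_mul_eq_mul_diagonal_smul h, hd, ← mul_add, diagonal_add]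
  rfl

end BlockDiagonal

section Fourier

variable {R : Type*} [CommRing R] {K : ℕ}

def fourierMatrix (K : ℕ) (ζ : R) : Matrix (Fin K) (Fin K) R :=
  vandermonde fun j : Fin K => ζ ^ (j : ℕ)

theorem transpose_circulant_mul_fourierMatrix [NeZero K] {ζ : R} (hζ : ζ ^ K = 1)
    (b : Fin K → R) :
    (circulant b)ᵀ * fourierMatrix K ζ = fourierMatrix K ζ * diagonal (b ᵥ* fourierMatrix K ζ) := by
  have hshift : ∀ t j : Fin K, ζ ^ ((t + j : Fin K) : ℕ) = ζ ^ (t : ℕ) * ζ ^ (j : ℕ) := by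
    intro t j
    rw [Fin.val_add, ← pow_eq_pow_mod _ hζ, pow_add]
  ext j l
  rw [mul_diagonal, mul_apply, vecMul, dotProduct, Finset.mul_sum]
  refine Fintype.sum_equiv (Equiv.subRight j) _ _ fun k => ?_
  simp only [transpose_apply, circulant_apply, fourierMatrix, vandermonde_apply,
    Equiv.subRight_apply]
  rw [mul_left_comm, ← mul_pow, mul_comm (ζ ^ _), ← hshift, sub_add_cancel]

theorem IsPrimitiveRoot.det_fourierMatrix_ne_zero [IsDomain R] {ζ : R}
    (hζ : IsPrimitiveRoot ζ K) : (fourierMatrix K ζ).det ≠ 0 :=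
  det_vandermonde_ne_zero_iff.mpr fun i j h => Fin.ext (hζ.pow_inj i.isLt j.isLt h)

end Fourier

theorem pow_sub_one_eq_inv {α : Type*} [DivisionMonoid α] {ζ : α} {K : ℕ} (hK : K ≠ 0)
    (hζ : ζ ^ K = 1) : ζ ^ (K - 1) = ζ⁻¹ := by
  refine eq_inv_of_mul_eq_one_left ?_
  rw [← pow_succ, Nat.sub_add_cancel (Nat.one_le_iff_ne_zero.mpr hK), hζ]

theorem Fin.sum_univ_eq_add_add_of_eq_zero {M : Type*} [AddCommMonoid M] {K : ℕ} (hK : 3 ≤ K)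
    (f : Fin K → M) (hf : ∀ t : Fin K, (t : ℕ) ≠ 0 → (t : ℕ) ≠ 1 → (t : ℕ) ≠ K - 1 → f t = 0) :
    ∑ t, f t = f ⟨0, by omega⟩ + f ⟨1, by omega⟩ + f ⟨K - 1, by omega⟩ := by
  rw [← Finset.sum_subset (Finset.subset_univ {⟨0, by omega⟩, ⟨1, by omega⟩, ⟨K - 1, by omega⟩})]
  · rw [Finset.sum_insert (by simp [Fin.ext_iff]; omega),
      Finset.sum_pair (by simp [Fin.ext_iff]; omega), add_assoc]
  · intro t _ ht
    simp only [Finset.mem_insert, Finset.mem_singleton, Fin.ext_iff, not_or] at ht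
    exact hf t ht.1 ht.2.1 ht.2.2

namespace Complex

variable {w : ℂ}

theorem add_inv_sub_two_of_norm_eq_one (hw : ‖w‖ = 1) :
    w + w⁻¹ - 2 = ((2 * w.re - 2 : ℝ) : ℂ) := by
  rw [inv_eq_conj hw, add_conj]; push_cast; ring

theorem sub_inv_sq_of_norm_eq_one (hw : ‖w‖ = 1) :
    (w - w⁻¹) ^ 2 = (((2 * w.re - 2) * (2 * w.re - 2 + 4) : ℝ) : ℂ) := by
  have hw0 : w ≠ 0 := by rintro rfl; simp at hw
  have h := add_inv_sub_two_of_norm_eq_one hw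
  push_cast at h ⊢
  rw [← h]
  field_simp
  ring

theorem re_eq_one_iff_of_norm_eq_one (hw : ‖w‖ = 1) : w.re = 1 ↔ w = 1 := by
  refine ⟨fun h => ext h ?_, fun h => by simp [h]⟩
  have hnorm := Complex.sq_norm w
  rw [hw, normSq_apply, h] at hnorm
  rw [one_im]
  exact mul_self_eq_zero.mp (by linarith)

end Complex

theorem IsPrimitiveRoot.norm_pow_eq_one {K : ℕ} {ζ : ℂ} (hζ : IsPrimitiveRoot ζ K) (hK : K ≠ 0)
    (l : ℕ) : ‖ζ ^ l‖ = 1 := by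
  rw [norm_pow, hζ.norm'_eq_one hK, one_pow]

section Circulant

variable {K : ℕ}

theorem circMatR_eq_transpose_circulant (b : Fin K → ℝ) : circMatR b = (circulant b)ᵀ := rfl

theorem matA₁_map_mul_fourierMatrix (hK : 3 ≤ K) {ζ : ℂ} (hζ : ζ ^ K = 1) :
    (matA₁ K).map Complex.ofRealHom * fourierMatrix K ζ
      = fourierMatrix K ζ * diagonal fun l : Fin K => ζ ^ (l : ℕ) + (ζ ^ (l : ℕ))⁻¹ - 2 := by
  have : NeZero K := ⟨by omega⟩
  have hK₁ : K - 1 ≠ 0 := by omega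
  have hK₂ : K - 1 ≠ 1 := by omega
  rw [matA₁, circMatR_eq_transpose_circulant, transpose_map, map_circulant,
    transpose_circulant_mul_fourierMatrix hζ]
  congr 2
  ext l
  rw [vecMul, dotProduct,
    Fin.sum_univ_eq_add_add_of_eq_zero hK _ fun t h₀ h₁ h₂ => by simp [h₀, h₁, h₂]]
  simp [fourierMatrix, hK₁, hK₂, pow_sub_one_eq_inv (by omega : K ≠ 0) hζ, inv_pow]
  ring

theorem matA₂_map_mul_fourierMatrix (hK : 3 ≤ K) {ζ : ℂ} (hζ : ζ ^ K = 1) :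
    (matA₂ K).map Complex.ofRealHom * fourierMatrix K ζ
      = fourierMatrix K ζ * diagonal fun l : Fin K => ζ ^ (l : ℕ) - (ζ ^ (l : ℕ))⁻¹ := by
  have : NeZero K := ⟨by omega⟩
  have hK₁ : K - 1 ≠ 0 := by omega
  have hK₂ : K - 1 ≠ 1 := by omega
  rw [matA₂, circMatR_eq_transpose_circulant, transpose_map, map_circulant,
    transpose_circulant_mul_fourierMatrix hζ]
  congr 2
  ext l
  rw [vecMul, dotProduct,
    Fin.sum_univ_eq_add_add_of_eq_zero hK _ fun t _ h₁ h₂ => by simp [h₁, h₂]]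
  simp [fourierMatrix, hK₁.symm, hK₂, pow_sub_one_eq_inv (by omega : K ≠ 0) hζ, inv_pow]
  ring

end Circulant

def blockT (K : ℕ) (c₁ c₂ c₃ c₄ : ℝ) : Matrix (Fin K ⊕ Fin K) (Fin K ⊕ Fin K) ℝ :=
  fromBlocks (c₁ • matA₁ K + c₄ • 1) (c₂ • matA₂ K) ((-c₂) • matA₂ K) (c₃ • matA₁ K)

theorem matT_eq_blockT (K : ℕ) (m dhat : ℝ) :
    matT K m dhat = blockT K ((K : ℝ) ^ 2 / (4 * π ^ 2)) ((dhat - 1) * K / (4 * π))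
      (-(dhat * (K : ℝ) ^ 2 / (4 * π ^ 2))) (dhat - m - 1) := rfl

theorem blockT_map_ofReal (K : ℕ) (c₁ c₂ c₃ c₄ : ℝ) :
    (blockT K c₁ c₂ c₃ c₄).map Complex.ofRealHom = fromBlocks
      ((c₁ : ℂ) • (matA₁ K).map Complex.ofRealHom + (c₄ : ℂ) • 1)
      ((c₂ : ℂ) • (matA₂ K).map Complex.ofRealHom)
      ((-c₂ : ℂ) • (matA₂ K).map Complex.ofRealHom)
      ((c₃ : ℂ) • (matA₁ K).map Complex.ofRealHom) := by
  simp [blockT, fromBlocks_map, Matrix.map_add, Matrix.map_neg, map_smul', Matrix.map_one]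

/-- The paper's quadratic for one Fourier mode, written in `μ = λ₁`, using `λ₂² = μ (μ + 4)`. -/
noncomputable def blockQuadratic (c₁ c₂ c₃ c₄ μ : ℝ) : ℝ[X] :=
  X ^ 2 - C ((c₁ + c₃) * μ + c₄) * X + C ((c₁ * μ + c₄) * (c₃ * μ) + c₂ ^ 2 * (μ * (μ + 4)))

theorem charpoly_blockT {K : ℕ} (hK : 3 ≤ K) {ζ : ℂ} (hζ : IsPrimitiveRoot ζ K)
    (c₁ c₂ c₃ c₄ : ℝ) :
    (blockT K c₁ c₂ c₃ c₄).charpoly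
      = ∏ l : Fin K, blockQuadratic c₁ c₂ c₃ c₄ (2 * (ζ ^ (l : ℕ)).re - 2) := by
  have hA₁ := matA₁_map_mul_fourierMatrix hK hζ.pow_eq_one
  have hA₂ := matA₂_map_mul_fourierMatrix hK hζ.pow_eq_one
  apply map_injective Complex.ofRealHom Complex.ofReal_injective
  rw [← charpoly_map, blockT_map_ofReal, Polynomial.map_prod,
    charpoly_fromBlocks_of_mul_eq_mul_diagonal hζ.det_fourierMatrix_ne_zero.isUnit
      (smul_add_smul_one_mul_eq_mul_diagonal hA₁ _ _) (smul_mul_eq_mul_diagonal_smul hA₂ _)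
      (smul_mul_eq_mul_diagonal_smul hA₂ _) (smul_mul_eq_mul_diagonal_smul hA₁ _)]
  refine Finset.prod_congr rfl fun l _ => ?_
  have hw := hζ.norm_pow_eq_one (by omega) l
  have hprod : (c₂ : ℂ) * (ζ ^ (l : ℕ) - (ζ ^ (l : ℕ))⁻¹) * (-c₂ * (ζ ^ (l : ℕ) - (ζ ^ (l : ℕ))⁻¹))
      = -(c₂ ^ 2 * (ζ ^ (l : ℕ) - (ζ ^ (l : ℕ))⁻¹) ^ 2) := by ring
  simp only [blockQuadratic, Polynomial.map_add, Polynomial.map_sub, Polynomial.map_mul,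
    Polynomial.map_pow, map_X, map_C, Pi.add_apply, Pi.smul_apply, smul_eq_mul, ← C_mul, hprod,
    Complex.add_inv_sub_two_of_norm_eq_one hw, Complex.sub_inv_sq_of_norm_eq_one hw]
  simp only [Complex.ofRealHom_eq_coe, Complex.ofReal_add, Complex.ofReal_mul, Complex.ofReal_sub,
    Complex.ofReal_pow, C_add, C_mul, C_neg, C_sub, C_pow]
  ring

theorem exists_X_sq_sub_C_mul_X_add_C_eq_mul {b c : ℝ} (hb : 0 < b) (hc : c ≤ 0) :
    ∃ r s : ℝ, X ^ 2 - C b * X + C c = (X - C r) * (X - C s) ∧ 0 < r ∧ s ≤ 0 ∧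
      (s = 0 ↔ c = 0) := by
  set D := b ^ 2 - 4 * c with hD
  have hsq : √D ^ 2 = D := Real.sq_sqrt (by nlinarith)
  have hbD : b ≤ √D := (le_abs_self b).trans (Real.abs_le_sqrt (by linarith))
  refine ⟨(b + √D) / 2, (b - √D) / 2, ?_, by linarith, by linarith, ⟨fun h => by nlinarith, ?_⟩⟩
  · have hsum : C b = C ((b + √D) / 2) + C ((b - √D) / 2) := by rw [← C_add]; ring_nf
    have hprod : C c = C ((b + √D) / 2) * C ((b - √D) / 2) := by
      rw [← C_mul]; congr 1; linear_combination (1 / 4 : ℝ) * hsq + (1 / 4 : ℝ) * hD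
    rw [hsum, hprod]
    ring
  · intro h
    rw [show D = b ^ 2 by simp [D, h], Real.sqrt_sq hb.le, sub_self, zero_div]

theorem blockQuadratic_eq_mul {c₁ c₂ c₃ c₄ μ : ℝ} (hc₄ : 0 < c₄) (hc₁₃ : c₁ + c₃ ≤ 0)
    (h₁ : c₂ ^ 2 + c₁ * c₃ ≤ 0) (h₂ : 0 < 4 * c₂ ^ 2 + c₃ * c₄) (hμ : μ ≤ 0) :
    ∃ r s : ℝ, blockQuadratic c₁ c₂ c₃ c₄ μ = (X - C r) * (X - C s) ∧ 0 < r ∧ s ≤ 0 ∧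
      (s = 0 ↔ μ = 0) := by
  have hconst : (c₁ * μ + c₄) * (c₃ * μ) + c₂ ^ 2 * (μ * (μ + 4))
      = μ * (μ * (c₂ ^ 2 + c₁ * c₃) + (4 * c₂ ^ 2 + c₃ * c₄)) := by ring
  have hfactor : 0 < μ * (c₂ ^ 2 + c₁ * c₃) + (4 * c₂ ^ 2 + c₃ * c₄) := by nlinarith
  obtain ⟨r, s, h, hr, hs, hs₀⟩ := exists_X_sq_sub_C_mul_X_add_C_eq_mul
    (b := (c₁ + c₃) * μ + c₄) (c := (c₁ * μ + c₄) * (c₃ * μ) + c₂ ^ 2 * (μ * (μ + 4)))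
    (by nlinarith) (by rw [hconst]; nlinarith)
  refine ⟨r, s, h, hr, hs, hs₀.trans ?_⟩
  rw [hconst, mul_eq_zero, or_iff_left hfactor.ne']

theorem roots_prod_X_sub_C_mul_X_sub_C {ι : Type*} [Fintype ι] (r s : ι → ℝ) :
    (∏ i, (X - C (r i)) * (X - C (s i))).roots
      = Finset.univ.val.map r + Finset.univ.val.map s := by
  have hprod : ∀ f : ι → ℝ,
      ∏ i, (X - C (f i)) = ((Finset.univ.val.map f).map fun a => X - C a).prod :=
    fun f => by rw [Multiset.map_map]; rfl
  rw [Finset.prod_mul_distrib, hprod r, hprod s, ← Multiset.prod_add, ← Multiset.map_add,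
    roots_multiset_prod_X_sub_C]

theorem sign_counts_map_add_map {ι : Type*} [Fintype ι] [DecidableEq ι] {r s : ι → ℝ} {i₀ : ι}
    (hr : ∀ i, 0 < r i) (hs : ∀ i, s i ≤ 0) (hs₀ : ∀ i, s i = 0 ↔ i = i₀) :
    (Finset.univ.val.map r + Finset.univ.val.map s).count 0 = 1 ∧
      ((Finset.univ.val.map r + Finset.univ.val.map s).filter (· < 0)).card
        = Fintype.card ι - 1 ∧
      ((Finset.univ.val.map r + Finset.univ.val.map s).filter (0 < ·)).card
        = Fintype.card ι := by
  have hneg : ∀ i, s i < 0 ↔ i ≠ i₀ := fun i => by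
    rw [lt_iff_le_and_ne, Ne, hs₀]; simp [hs i]
  refine ⟨?_, ?_, ?_⟩
  · simp [Multiset.count_map, (hr _).ne, eq_comm (a := (0 : ℝ)), hs₀, Multiset.filter_eq']
  · simp [Multiset.filter_map, (hr _).le, hneg, ← Finset.filter_val, Finset.filter_ne']
  · simp [Multiset.filter_map, hr, not_lt.mpr (hs _)]

theorem IsPrimitiveRoot.re_pow_eq_one_iff {K : ℕ} [NeZero K] {ζ : ℂ} (hζ : IsPrimitiveRoot ζ K)
    (l : Fin K) : (ζ ^ (l : ℕ)).re = 1 ↔ l = 0 := by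
  rw [Complex.re_eq_one_iff_of_norm_eq_one (hζ.norm_pow_eq_one NeZero.out _),
    hζ.pow_eq_one_iff_dvd, Fin.ext_iff]
  exact ⟨fun h => Nat.eq_zero_of_dvd_of_lt h l.isLt, fun h => h ▸ dvd_zero K⟩

theorem blockT_charpoly_roots_signs {K : ℕ} (hK : 3 ≤ K) {c₁ c₂ c₃ c₄ : ℝ} (hc₄ : 0 < c₄)
    (hc₁₃ : c₁ + c₃ ≤ 0) (h₁ : c₂ ^ 2 + c₁ * c₃ ≤ 0) (h₂ : 0 < 4 * c₂ ^ 2 + c₃ * c₄) :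
    (blockT K c₁ c₂ c₃ c₄).charpoly.roots.count 0 = 1 ∧
      ((blockT K c₁ c₂ c₃ c₄).charpoly.roots.filter (· < 0)).card = K - 1 ∧
      ((blockT K c₁ c₂ c₃ c₄).charpoly.roots.filter (0 < ·)).card = K := by
  have : NeZero K := ⟨by omega⟩
  obtain ⟨ζ, hζ⟩ : ∃ ζ : ℂ, IsPrimitiveRoot ζ K := ⟨_, Complex.isPrimitiveRoot_exp K (by omega)⟩
  have hμ : ∀ l : Fin K, 2 * (ζ ^ (l : ℕ)).re - 2 ≤ 0 := fun l => by
    linarith [(ζ ^ (l : ℕ)).re_le_norm, hζ.norm_pow_eq_one NeZero.out l]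
  have hμ₀ : ∀ l : Fin K, 2 * (ζ ^ (l : ℕ)).re - 2 = 0 ↔ l = 0 := fun l => by
    rw [← hζ.re_pow_eq_one_iff l]
    constructor <;> intro <;> linarith
  choose r s hfactor hr hs hs₀ using fun l => blockQuadratic_eq_mul hc₄ hc₁₃ h₁ h₂ (hμ l)
  rw [charpoly_blockT hK hζ, Finset.prod_congr rfl fun l _ => hfactor l,
    roots_prod_X_sub_C_mul_X_sub_C]
  simpa using sign_counts_map_add_map hr hs fun l => (hs₀ l).trans (hμ₀ l)

theorem mul_pi_sq_le_sq_of_le_log {m dhat : ℝ} {K : ℕ} (hm : 0 ≤ m) (hK : 2 * m * π ^ 2 ≤ K)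
    (hd : dhat ≤ 2 * m * Real.log K) : dhat * π ^ 2 ≤ (K : ℝ) ^ 2 := calc
  dhat * π ^ 2 ≤ 2 * m * K * π ^ 2 := by
    gcongr
    exact hd.trans (mul_le_mul_of_nonneg_left (Real.log_le_self K.cast_nonneg) (by linarith))
  _ = K * (2 * m * π ^ 2) := by ring
  _ ≤ K ^ 2 := by nlinarith [K.cast_nonneg (α := ℝ)]

theorem stmt_16 (m : ℝ) (hm : 1 < m) :
    ∃ K₀ : ℕ, ∀ K : ℕ, K₀ ≤ K → ∀ dhat : ℝ, m + 1 < dhat →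
      m * Real.log K ≤ dhat → dhat ≤ 2 * m * Real.log K →
      Multiset.count (0 : ℝ) (Matrix.charpoly (matT K m dhat)).roots = 1 ∧
      Multiset.card (Multiset.filter (fun Λ : ℝ => Λ < 0)
        (Matrix.charpoly (matT K m dhat)).roots) = K - 1 ∧
      Multiset.card (Multiset.filter (fun Λ : ℝ => 0 < Λ)
        (Matrix.charpoly (matT K m dhat)).roots) = K := by
  refine ⟨⌈2 * m * π ^ 2⌉₊ + 3, fun K hK dhat hd₁ _ hd₂ => ?_⟩
  have hKpos : (0 : ℝ) < K := by exact_mod_cast (by omega : 0 < K)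
  have hdK : dhat * π ^ 2 ≤ (K : ℝ) ^ 2 := mul_pi_sq_le_sq_of_le_log (by linarith)
    ((Nat.le_ceil _).trans (by exact_mod_cast (by omega : ⌈2 * m * π ^ 2⌉₊ ≤ K))) hd₂
  rw [matT_eq_blockT]
  refine blockT_charpoly_roots_signs (by omega) (by linarith) ?_ ?_ ?_
  · rw [show (K : ℝ) ^ 2 / (4 * π ^ 2) + -(dhat * K ^ 2 / (4 * π ^ 2))
        = (1 - dhat) * (K ^ 2 / (4 * π ^ 2)) by ring]
    exact mul_nonpos_of_nonpos_of_nonneg (by linarith) (by positivity)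
  · rw [show ((dhat - 1) * K / (4 * π)) ^ 2 + K ^ 2 / (4 * π ^ 2) * -(dhat * K ^ 2 / (4 * π ^ 2))
        = ((dhat - 1) ^ 2 * π ^ 2 - dhat * K ^ 2) * (K ^ 2 / (16 * π ^ 4)) by
          field_simp; ring]
    refine mul_nonpos_of_nonpos_of_nonneg ?_ (by positivity)
    nlinarith [mul_le_mul_of_nonneg_left hdK (by linarith : (0 : ℝ) ≤ dhat), pi_pos]
  · rw [show 4 * ((dhat - 1) * K / (4 * π)) ^ 2 + -(dhat * K ^ 2 / (4 * π ^ 2)) * (dhat - m - 1)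
        = ((m - 1) * dhat + 1) * (K ^ 2 / (4 * π ^ 2)) by field_simp; ring]
    exact mul_pos (by nlinarith) (by positivity)
end
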